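/- arXiv:2201.09861 — 8 statements merged into one kernel-verified Lean document; each statement's English description precedes it below -/
import Mathlib

section
/- For every k ∈ ℕ with k ≥ 1 and every α ∈ [1/(k+1), 1/k], the random variable T(α) satisfies Q_2(T(α)) = α, where Q_2(X) = sup_{x∈ℝ} P(X ∈ (x, x+2]). -/
open MeasureTheory ProbabilityTheory
open scoped ENNReal NNReal

/-- The Lévy concentration function `Q_h(μ) = sup_x μ((x, x+h])`. -/
noncomputable def conc (μ : Measure ℝ) (h : ℝ) : ℝ≥0∞ :=
  ⨆ x : ℝ, μ (Set.Ioc x (x + h))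

/-- `nu k` is the uniform distribution on the arithmetic progression `{-k+1, -k+3, …, k-1}`. -/
noncomputable def nu (k : ℕ) : Measure ℝ :=
  (k : ℝ≥0∞)⁻¹ • ∑ i ∈ Finset.range k, Measure.dirac (2 * (i : ℝ) - k + 1)

instance nu_fin (k : ℕ) : IsFiniteMeasure (nu k) := by
  constructor
  rw [nu, Measure.smul_apply, Measure.coe_finset_sum, Finset.sum_apply]
  simp only [Measure.dirac_apply' _ MeasurableSet.univ, Set.indicator_univ, Pi.one_apply,
    Finset.sum_const, Finset.card_range, smul_eq_mul, nsmul_eq_mul, mul_one]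
  rcases Nat.eq_zero_or_pos k with h | h
  · simp [h]
  · rw [ENNReal.inv_mul_cancel (by exact_mod_cast h.ne' : (k:ℝ≥0∞) ≠ 0) (by simp)]
    exact ENNReal.one_lt_top


/-- The law of `T(α)`: for `α ∈ [1/(k+1), 1/k]` (with `k = ⌊1/α⌋`), the mixture
`(1-τ)·ν^{k+1} + τ·ν^k` where `τ = k(k+1)α - k`. -/
noncomputable def Tdist (α : ℝ) : Measure ℝ :=
  ENNReal.ofReal (1 - ((⌊1/α⌋₊ : ℝ) * (⌊1/α⌋₊ + 1) * α - ⌊1/α⌋₊)) • nu (⌊1/α⌋₊ + 1)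
    + ENNReal.ofReal ((⌊1/α⌋₊ : ℝ) * (⌊1/α⌋₊ + 1) * α - ⌊1/α⌋₊) • nu ⌊1/α⌋₊

instance Tdist_fin (α : ℝ) : IsFiniteMeasure (Tdist α) := by
  constructor
  rw [Tdist, Measure.add_apply, Measure.smul_apply, Measure.smul_apply, smul_eq_mul, smul_eq_mul]
  exact ENNReal.add_lt_top.2 ⟨ENNReal.mul_lt_top ENNReal.ofReal_lt_top (measure_lt_top _ _),
    ENNReal.mul_lt_top ENNReal.ofReal_lt_top (measure_lt_top _ _)⟩


lemma nu_apply (m : ℕ) (s : Set ℝ) (hs : MeasurableSet s) :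
    nu m s = (m : ℝ≥0∞)⁻¹ * ∑ i ∈ Finset.range m, s.indicator 1 (2 * (i : ℝ) - m + 1) := by
  rw [nu, Measure.smul_apply, Measure.coe_finset_sum, Finset.sum_apply, smul_eq_mul]
  congr 1
  exact Finset.sum_congr rfl fun i _ => Measure.dirac_apply' _ hs

lemma card_filter_le_one (m : ℕ) (x : ℝ) :
    ((Finset.range m).filter (fun i : ℕ => (2 * (i : ℝ) - m + 1) ∈ Set.Ioc x (x + 2))).card ≤ 1 := by
  refine Finset.card_le_one.mpr fun a ha b hb => ?_
  simp only [Finset.mem_filter, Set.mem_Ioc] at ha hb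
  have h1 := ha.2.1; have h2 := ha.2.2; have h3 := hb.2.1; have h4 := hb.2.2
  have hab : (a : ℝ) < b + 1 := by linarith
  have hba : (b : ℝ) < a + 1 := by linarith
  have hA : a < b + 1 := by exact_mod_cast hab
  have hB : b < a + 1 := by exact_mod_cast hba
  omega

lemma nu_Ioc_le (m : ℕ) (x : ℝ) : nu m (Set.Ioc x (x + 2)) ≤ (m : ℝ≥0∞)⁻¹ := by
  rw [nu_apply m _ measurableSet_Ioc]
  have hsum : ∑ i ∈ Finset.range m, (Set.Ioc x (x + 2)).indicator (1 : ℝ → ℝ≥0∞)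
      (2 * (i : ℝ) - m + 1) ≤ 1 := by
    simp only [Set.indicator_apply, Pi.one_apply]
    rw [Finset.sum_boole]
    exact_mod_cast card_filter_le_one m x
  calc (m : ℝ≥0∞)⁻¹ * ∑ i ∈ Finset.range m, (Set.Ioc x (x + 2)).indicator 1
        (2 * (i : ℝ) - m + 1) ≤ (m : ℝ≥0∞)⁻¹ * 1 := mul_le_mul_right hsum _
    _ = (m : ℝ≥0∞)⁻¹ := mul_one _

lemma nu_Ioc_eq (m : ℕ) (hm : 1 ≤ m) (x : ℝ) (h : (1 : ℝ) - m ∈ Set.Ioc x (x + 2)) :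
    nu m (Set.Ioc x (x + 2)) = (m : ℝ≥0∞)⁻¹ := by
  rw [nu_apply m _ measurableSet_Ioc]
  have hmem : (0 : ℕ) ∈ (Finset.range m).filter
      (fun i : ℕ => (2 * (i : ℝ) - m + 1) ∈ Set.Ioc x (x + 2)) := by
    simp only [Finset.mem_filter, Finset.mem_range]
    refine ⟨hm, ?_⟩
    have e : 2 * ((0 : ℕ) : ℝ) - m + 1 = 1 - m := by push_cast; ring
    rw [e]; exact h
  have hcard : ((Finset.range m).filter
      (fun i : ℕ => (2 * (i : ℝ) - m + 1) ∈ Set.Ioc x (x + 2))).card = 1 :=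
    le_antisymm (card_filter_le_one m x) (Finset.card_pos.mpr ⟨0, hmem⟩)
  have hsum : ∑ i ∈ Finset.range m, (Set.Ioc x (x + 2)).indicator (1 : ℝ → ℝ≥0∞)
      (2 * (i : ℝ) - m + 1) = 1 := by
    simp only [Set.indicator_apply, Pi.one_apply]
    rw [Finset.sum_boole, hcard]
    norm_num
  rw [hsum, mul_one]

/-- For k ≥ 1 and α ∈ [1/(k+1), 1/k], Q_2(T(α)) = α, where T(α) has law
(1-τ)·ν^{k+1} + τ·ν^k with τ = k(k+1)α - k. -/
theorem conc_Tdist_eq (k : ℕ) (hk : 1 ≤ k) (α : ℝ)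
    (hα : α ∈ Set.Icc (1 / ((k : ℝ) + 1)) (1 / (k : ℝ))) :
    conc (ENNReal.ofReal (1 - ((k : ℝ) * (k + 1) * α - k)) • nu (k + 1)
      + ENNReal.ofReal ((k : ℝ) * (k + 1) * α - k) • nu k) 2 = ENNReal.ofReal α := by
  obtain ⟨h1, h2⟩ := hα
  have hk0 : (0 : ℝ) < k := by exact_mod_cast hk
  set τ : ℝ := (k : ℝ) * (k + 1) * α - k with hτdef
  have hk1 : (0 : ℝ) < (k : ℝ) + 1 := by linarith
  have h1' : 1 ≤ α * ((k : ℝ) + 1) := by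
    rw [div_le_iff₀ hk1] at h1; linarith
  have h2' : α * (k : ℝ) ≤ 1 := by
    rw [le_div_iff₀ hk0] at h2; linarith
  have hτ0 : 0 ≤ τ := by nlinarith
  have hτ1 : τ ≤ 1 := by nlinarith
  have hval : ENNReal.ofReal (1 - τ) * ((k : ℝ≥0∞) + 1)⁻¹
      + ENNReal.ofReal τ * ((k : ℝ≥0∞))⁻¹ = ENNReal.ofReal α := by
    have e1 : ((k : ℝ≥0∞) + 1)⁻¹ = ENNReal.ofReal (((k : ℝ) + 1)⁻¹) := by
      rw [ENNReal.ofReal_inv_of_pos hk1, ENNReal.ofReal_add (le_of_lt hk0) zero_le_one,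
        ENNReal.ofReal_natCast, ENNReal.ofReal_one]
    have e2 : ((k : ℝ≥0∞))⁻¹ = ENNReal.ofReal (((k : ℝ))⁻¹) := by
      rw [ENNReal.ofReal_inv_of_pos hk0, ENNReal.ofReal_natCast]
    rw [e1, e2, ← ENNReal.ofReal_mul (by linarith), ← ENNReal.ofReal_mul hτ0,
      ← ENNReal.ofReal_add (mul_nonneg (by linarith) (by positivity)) (mul_nonneg hτ0 (by positivity))]
    congr 1
    field_simp
    ring
  have happly : ∀ x : ℝ, (ENNReal.ofReal (1 - τ) • nu (k + 1)
      + ENNReal.ofReal τ • nu k) (Set.Ioc x (x + 2))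
      = ENNReal.ofReal (1 - τ) * nu (k + 1) (Set.Ioc x (x + 2))
        + ENNReal.ofReal τ * nu k (Set.Ioc x (x + 2)) := fun x => by
    rw [Measure.add_apply, Measure.smul_apply, Measure.smul_apply, smul_eq_mul, smul_eq_mul]
  have hcast : ((k + 1 : ℕ) : ℝ≥0∞) = (k : ℝ≥0∞) + 1 := by push_cast; ring
  refine le_antisymm (iSup_le fun x => ?_) ?_
  · rw [happly x]
    calc ENNReal.ofReal (1 - τ) * nu (k + 1) (Set.Ioc x (x + 2))
          + ENNReal.ofReal τ * nu k (Set.Ioc x (x + 2))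
        ≤ ENNReal.ofReal (1 - τ) * ((k : ℝ≥0∞) + 1)⁻¹
          + ENNReal.ofReal τ * ((k : ℝ≥0∞))⁻¹ := by
          gcongr
          · rw [← hcast]; exact nu_Ioc_le (k + 1) x
          · exact nu_Ioc_le k x
      _ = ENNReal.ofReal α := hval
  · have hx1 : nu (k + 1) (Set.Ioc (-(k : ℝ) - 1) (-(k : ℝ) - 1 + 2)) = ((k : ℝ≥0∞) + 1)⁻¹ := by
      rw [nu_Ioc_eq (k + 1) (by omega) _ (by push_cast; constructor <;> linarith), hcast]
    have hx2 : nu k (Set.Ioc (-(k : ℝ) - 1) (-(k : ℝ) - 1 + 2)) = ((k : ℝ≥0∞))⁻¹ :=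
      nu_Ioc_eq k hk _ (by push_cast; constructor <;> linarith)
    have : (ENNReal.ofReal (1 - τ) • nu (k + 1) + ENNReal.ofReal τ • nu k)
        (Set.Ioc (-(k : ℝ) - 1) (-(k : ℝ) - 1 + 2)) = ENNReal.ofReal α := by
      rw [happly, hx1, hx2, hval]
    calc ENNReal.ofReal α = _ := this.symm
      _ ≤ conc _ 2 := le_iSup (fun x => (ENNReal.ofReal (1 - τ) • nu (k + 1)
          + ENNReal.ofReal τ • nu k) (Set.Ioc x (x + 2))) (-(k : ℝ) - 1)
end

section
/- Let F be an antichain in the product poset L(k₁,…,kₙ) = {0,…,k₁-1} × ⋯ × {0,…,kₙ-1} (with the coordinatewise partial order), and for each i let F_i = F ∩ L_i where L_i is the set of vectors whose coordinates sum to i. Then ∑_i |F_i|/|L_i| ≤ 1. -/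
/-
Call `f` a normalized flow if it weights comparable pairs `x ≤ y` of consecutive ranks so that at
most `1 / |L_i|` leaves every element of `L_i` and at least `1 / |L_{i+1}|` enters every element
of `L_{i+1}`. Summing the flow into a set `A ⊆ L_{i+1}` gives the normalized matching property
`|A| / |L_{i+1}| ≤ |∇A| / |L_i|` for its shadow `∇A`, and pushing the top level of an antichain
down onto its shadow, one level at a time, gives the LYM inequality.

Normalized flows on `L(k₁,…,kₙ)` are built by induction on `n`, as in Harper's product theorem:
if `X` carries a normalized flow and its rank numbers `p` are log-concave, then the same holds for
`{0,…,k-1} × X`, whose rank numbers are the window sums `q m = p m + ⋯ + p (m - k + 1)`. From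
`(s, x)` on level `m`, a share of the flow of `X` stays in the layer `s` and the rest steps up to
`(s + 1, x)`; the shares are differences of the distribution functions of the chain coordinate on
the levels `m` and `m + 1`, which interlace because `p` is log-concave.
-/

open Finset

namespace MultisetLYM

variable {X : Type*} [Fintype X]

/-- Indexed by `ℤ`, so that shifted indices make sense; it vanishes below `0`. -/
def levelCard (rk : X → ℕ) (r : ℤ) : ℕ := #{x | (rk x : ℤ) = r}

lemma levelCard_natCast (rk : X → ℕ) (i : ℕ) : levelCard rk i = #{x | rk x = i} := by
  simp [levelCard]

lemma levelCard_rank_pos (rk : X → ℕ) (x : X) : 0 < levelCard rk (rk x) :=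
  card_pos.2 ⟨x, by simp⟩

lemma levelCard_of_neg (rk : X → ℕ) {r : ℤ} (hr : r < 0) : levelCard rk r = 0 := by
  simp only [levelCard, card_eq_zero, filter_eq_empty_iff, mem_univ, true_implies]
  omega

lemma levelCard_of_forall_eq_zero {rk : X → ℕ} (h : ∀ x, rk x = 0) {r : ℤ} (hr : r ≠ 0) :
    levelCard rk r = 0 := by
  simp only [levelCard, card_eq_zero, filter_eq_empty_iff, mem_univ, true_implies, h]
  omega

lemma levelCard_comp_equiv {Y : Type*} [Fintype Y] (e : X ≃ Y) {rkX : X → ℕ} {rkY : Y → ℕ}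
    (h : ∀ x, rkY (e x) = rkX x) (r : ℤ) : levelCard rkX r = levelCard rkY r :=
  card_equiv e fun x => by simp [h]

structure IsNormalizedFlow [LE X] (rk : X → ℕ) (f : X → X → ℝ) : Prop where
  nonneg : ∀ x y, 0 ≤ f x y
  le_of_ne_zero : ∀ ⦃x y⦄, f x y ≠ 0 → x ≤ y ∧ rk y = rk x + 1
  sum_le : ∀ x, ∑ y, f x y ≤ (levelCard rk (rk x) : ℝ)⁻¹
  inv_le_sum : ∀ y, 0 < rk y → (levelCard rk (rk y) : ℝ)⁻¹ ≤ ∑ x, f x y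

section LYM

variable [Preorder X] {rk : X → ℕ} {f : X → X → ℝ}

open scoped Classical in
noncomputable def shadowAt (rk : X → ℕ) (A : Finset X) (i : ℕ) : Finset X :=
  {z | rk z = i ∧ ∃ a ∈ A, z ≤ a}

lemma mem_shadowAt {A : Finset X} {i : ℕ} {z : X} :
    z ∈ shadowAt rk A i ↔ rk z = i ∧ ∃ a ∈ A, z ≤ a := by
  simp [shadowAt]

theorem IsNormalizedFlow.card_div_le_card_shadowAt_div (hf : IsNormalizedFlow rk f) {i : ℕ}
    {A : Finset X} (hA : ∀ a ∈ A, rk a = i + 1) :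
    (#A : ℝ) / levelCard rk (i + 1 : ℕ) ≤ #(shadowAt rk A i) / levelCard rk i := by
  calc (#A : ℝ) / levelCard rk (i + 1 : ℕ) = ∑ _y ∈ A, (levelCard rk (i + 1 : ℕ) : ℝ)⁻¹ := by
        rw [sum_const, nsmul_eq_mul, div_eq_mul_inv]
    _ ≤ ∑ y ∈ A, ∑ x, f x y := sum_le_sum fun y hy => by
        simpa [hA y hy] using hf.inv_le_sum y (by simp [hA y hy])
    _ = ∑ x ∈ shadowAt rk A i, ∑ y ∈ A, f x y := by
        rw [sum_comm]
        refine (sum_subset (subset_univ _) fun x _ hx => sum_eq_zero fun y hy => ?_).symm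
        by_contra hxy
        obtain ⟨hle, hrk⟩ := hf.le_of_ne_zero hxy
        exact hx (mem_shadowAt.2 ⟨by have := hA y hy; omega, y, hy, hle⟩)
    _ ≤ ∑ x ∈ shadowAt rk A i, ∑ y, f x y := sum_le_sum fun x _ =>
        sum_le_sum_of_subset_of_nonneg (subset_univ A) fun y _ _ => hf.nonneg x y
    _ ≤ ∑ _x ∈ shadowAt rk A i, (levelCard rk i : ℝ)⁻¹ := sum_le_sum fun x hx => by
        simpa [(mem_shadowAt.1 hx).1] using hf.sum_le x
    _ = #(shadowAt rk A i) / levelCard rk i := by rw [sum_const, nsmul_eq_mul, div_eq_mul_inv]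

open scoped Classical in
noncomputable def pushDown (rk : X → ℕ) (F : Finset X) (m : ℕ) : Finset X :=
  {x ∈ F | rk x ≤ m} ∪ shadowAt rk {x ∈ F | rk x = m + 1} m

section PushDown

variable {F : Finset X} (hF : ∀ z ∈ F, ∀ w ∈ F, z ≤ w → rk w ≤ rk z) (m : ℕ)
include hF

lemma notMem_shadowAt_of_mem {z : X} (hz : z ∈ F) :
    z ∉ shadowAt rk {x ∈ F | rk x = m + 1} m := fun hzD => by
  obtain ⟨hrk, a, ha, hza⟩ := mem_shadowAt.1 hzD
  have := hF z hz a (mem_filter.1 ha).1 hza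
  have := (mem_filter.1 ha).2
  omega

lemma pushDown_rank_le :
    ∀ z ∈ pushDown rk F m, ∀ w ∈ pushDown rk F m, z ≤ w → rk w ≤ rk z := by
  intro z hz w hw hzw
  simp only [pushDown, mem_union, mem_filter, mem_shadowAt] at hz hw
  rcases hz with ⟨hzF, hz⟩ | ⟨hz, -⟩ <;> rcases hw with ⟨hwF, hw⟩ | ⟨hw, a, ha, hwa⟩
  · exact hF z hzF w hwF hzw
  · have := hF z hzF a ha.1 (hzw.trans hwa)
    omega
  · omega
  · omega

lemma card_filter_pushDown {i : ℕ} (hi : i ≤ m) :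
    #{x ∈ pushDown rk F m | rk x = i} =
      #{x ∈ F | rk x = i} + if i = m then #(shadowAt rk {x ∈ F | rk x = m + 1} m) else 0 := by
  classical
  have hdisj : Disjoint {x ∈ F | rk x ≤ m} (shadowAt rk {x ∈ F | rk x = m + 1} m) :=
    disjoint_left.2 fun _ hz => notMem_shadowAt_of_mem hF m (mem_filter.1 hz).1
  rw [pushDown, filter_union,
    card_union_of_disjoint (hdisj.mono (filter_subset _ _) (filter_subset _ _)), filter_filter]
  congr 1
  · exact congrArg card (filter_congr fun x _ => by omega)
  · split_ifs with him
    · exact congrArg card (filter_true_of_mem fun z hz => (mem_shadowAt.1 hz).1.trans him.symm)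
    · exact card_eq_zero.2 (filter_false_of_mem fun z hz => by
        have := (mem_shadowAt.1 hz).1; omega)

end PushDown

theorem IsNormalizedFlow.sum_card_div_le_one (hf : IsNormalizedFlow rk f) (m : ℕ) {F : Finset X}
    (hF : ∀ z ∈ F, ∀ w ∈ F, z ≤ w → rk w ≤ rk z) :
    ∑ i ∈ range (m + 1), (#{x ∈ F | rk x = i} : ℝ) / #{x | rk x = i} ≤ 1 := by
  induction m generalizing F with
  | zero =>
    rw [sum_range_one]
    exact div_le_one_of_le₀ (by gcongr; exact subset_univ F) (Nat.cast_nonneg _)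
  | succ m ih =>
    set D := shadowAt rk {x ∈ F | rk x = m + 1} m
    have hshadow := hf.card_div_le_card_shadowAt_div (A := {x ∈ F | rk x = m + 1})
      fun a ha => (mem_filter.1 ha).2
    rw [levelCard_natCast, levelCard_natCast] at hshadow
    have hsplit : ∀ i ∈ range (m + 1),
        (#{x ∈ pushDown rk F m | rk x = i} : ℝ) / #{x | rk x = i} =
          #{x ∈ F | rk x = i} / #{x | rk x = i} +
            if i = m then (#D : ℝ) / #{x | rk x = m} else 0 := fun i hi => by
      rw [card_filter_pushDown hF m (Nat.lt_succ_iff.1 (mem_range.1 hi))]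
      split_ifs with h <;> simp [add_div, h, D]
    calc _ = ∑ i ∈ range (m + 1), (#{x ∈ F | rk x = i} : ℝ) / #{x | rk x = i} +
          (#{x ∈ F | rk x = m + 1} : ℝ) / #{x | rk x = m + 1} := sum_range_succ _ _
      _ ≤ ∑ i ∈ range (m + 1), (#{x ∈ F | rk x = i} : ℝ) / #{x | rk x = i} +
          (#D : ℝ) / #{x | rk x = m} := by gcongr
      _ = ∑ i ∈ range (m + 1), (#{x ∈ pushDown rk F m | rk x = i} : ℝ) / #{x | rk x = i} := by
        rw [sum_congr rfl hsplit, sum_add_distrib, sum_ite_eq', if_pos (self_mem_range_succ m)]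
      _ ≤ 1 := ih (pushDown_rank_le hF m)

end LYM

/-- Log-concavity without internal zeros. -/
def IsLogConcave (p : ℤ → ℕ) : Prop :=
  ∀ a b : ℤ, b ≤ a → p (a + 1) * p (b - 1) ≤ p a * p b

def windowSum (p : ℤ → ℕ) (m : ℤ) (σ : ℕ) : ℕ := ∑ t ∈ range σ, p (m - t)

section LogConcave

variable {p : ℤ → ℕ}

theorem IsLogConcave.mul_le_mul_of_add_eq (hp : IsLogConcave p) {a b c d : ℤ}
    (hsum : a + b = c + d) (hc : b ≤ c) (hd : b ≤ d) : p a * p b ≤ p c * p d := by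
  have spread : ∀ n : ℕ, ∀ c d : ℤ, d ≤ c → p (c + n) * p (d - n) ≤ p c * p d := by
    intro n
    induction n with
    | zero => simp
    | succ n ih =>
      intro c d hdc
      calc p (c + (n + 1 : ℕ)) * p (d - (n + 1 : ℕ)) = p (c + n + 1) * p (d - n - 1) := by
            push_cast; ring_nf
        _ ≤ p (c + n) * p (d - n) := hp _ _ (by omega)
        _ ≤ p c * p d := ih c d hdc
  rcases le_total d c with h | h
  · have := spread (d - b).toNat c d h
    rwa [show c + ((d - b).toNat : ℤ) = a by omega, show d - ((d - b).toNat : ℤ) = b by omega]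
      at this
  · have := spread (c - b).toNat d c h
    rwa [show d + ((c - b).toNat : ℤ) = a by omega, show c - ((c - b).toNat : ℤ) = b by omega,
      mul_comm (p d)] at this

lemma windowSum_succ (p : ℤ → ℕ) (m : ℤ) (σ : ℕ) :
    windowSum p m (σ + 1) = windowSum p m σ + p (m - σ) :=
  sum_range_succ _ _

lemma windowSum_add_one_succ (p : ℤ → ℕ) (m : ℤ) (σ : ℕ) :
    windowSum p (m + 1) (σ + 1) = p (m + 1) + windowSum p m σ := by
  rw [windowSum, sum_range_succ', add_comm]
  congr 1
  · simp
  · exact sum_congr rfl fun t _ => by push_cast; ring_nf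

lemma windowSum_mono (p : ℤ → ℕ) (m : ℤ) : Monotone (windowSum p m) :=
  fun _ _ h => sum_le_sum_of_subset (range_subset_range.2 h)

lemma windowSum_eq_of_lt (hp : ∀ r < 0, p r = 0) {m : ℤ} {σ τ : ℕ} (hσ : m < σ) (hστ : σ ≤ τ) :
    windowSum p m σ = windowSum p m τ := by
  refine sum_subset (range_subset_range.2 hστ) fun t ht htσ => hp _ ?_
  simp only [mem_range, not_lt] at ht htσ
  omega

theorem isLogConcave_windowSum (hp : IsLogConcave p) (k : ℕ) :
    IsLogConcave (windowSum p · k) := by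
  intro a b hba
  have top : windowSum p (a + 1) k + p (a + 1 - k) = windowSum p a k + p (a + 1) := by
    rw [← windowSum_succ, windowSum_add_one_succ, add_comm]
  have bottom : windowSum p (b - 1) k + p b = windowSum p b k + p (b - k) := by
    have := windowSum_add_one_succ p (b - 1) k
    rw [sub_add_cancel, windowSum_succ] at this
    omega
  have cross_top : p (a + 1) * windowSum p (b - 1) k ≤ windowSum p a k * p b := by
    simp only [windowSum, mul_sum, sum_mul]
    exact sum_le_sum fun t _ => hp.mul_le_mul_of_add_eq (by ring) (by omega) (by omega)
  have cross_bottom : windowSum p a k * p (b - k) ≤ p (a + 1 - k) * windowSum p (b - 1) k := by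
    simp only [windowSum, mul_sum, sum_mul]
    refine sum_le_sum fun t ht => ?_
    have := mem_range.1 ht
    exact hp.mul_le_mul_of_add_eq (by ring) (by omega) (by omega)
  refine Nat.le_of_add_le_add_right (b := p (a + 1 - k) * windowSum p (b - 1) k) ?_
  calc _ = windowSum p a k * windowSum p (b - 1) k + p (a + 1) * windowSum p (b - 1) k := by
        rw [← add_mul, top, add_mul]
    _ ≤ windowSum p a k * windowSum p (b - 1) k + windowSum p a k * p b := by gcongr
    _ = windowSum p a k * windowSum p b k + windowSum p a k * p (b - k) := by
        rw [← mul_add, bottom, mul_add]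
    _ ≤ _ := by gcongr

theorem IsLogConcave.windowSum_mul_le (hp : IsLogConcave p) (m : ℤ) {σ τ : ℕ} (h : σ ≤ τ) :
    windowSum p (m + 1) σ * windowSum p m τ ≤ windowSum p m σ * windowSum p (m + 1) τ := by
  have cross : windowSum p (m + 1) σ * ∑ u ∈ Ico σ τ, p (m - u) ≤
      windowSum p m σ * ∑ u ∈ Ico σ τ, p (m + 1 - u) := by
    simp only [windowSum, sum_mul_sum]
    refine sum_le_sum fun t ht => sum_le_sum fun u hu => ?_
    have := mem_range.1 ht
    have := (mem_Ico.1 hu).1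
    exact hp.mul_le_mul_of_add_eq (by ring) (by omega) (by omega)
  simp only [windowSum, ← sum_range_add_sum_Ico _ h, mul_add] at cross ⊢
  linarith [mul_comm (∑ t ∈ range σ, p (m + 1 - t)) (∑ t ∈ range σ, p (m - t))]

/-- The proportion of the level `m` of `Fin k × X` made of the elements with chain coordinate
below `s`, when `p` counts the levels of `X`. -/
noncomputable def windowCDF (p : ℤ → ℕ) (k : ℕ) (m : ℤ) (s : ℕ) : ℝ :=
  windowSum p m s / windowSum p m k

noncomputable def horizontalWeight (p : ℤ → ℕ) (k : ℕ) (m : ℤ) (s : ℕ) : ℝ :=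
  windowCDF p k (m + 1) (s + 1) - windowCDF p k m s

noncomputable def verticalWeight (p : ℤ → ℕ) (k : ℕ) (m : ℤ) (s : ℕ) : ℝ :=
  windowCDF p k m (s + 1) - windowCDF p k (m + 1) (s + 1)

lemma windowCDF_succ_sub (p : ℤ → ℕ) (k : ℕ) (m : ℤ) (s : ℕ) :
    windowCDF p k m (s + 1) - windowCDF p k m s = p (m - s) / windowSum p m k := by
  simp only [windowCDF, windowSum_succ, Nat.cast_add]
  ring

lemma horizontalWeight_add_verticalWeight (p : ℤ → ℕ) (k : ℕ) (m : ℤ) (s : ℕ) :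
    horizontalWeight p k m s + verticalWeight p k m s = p (m - s) / windowSum p m k := by
  rw [← windowCDF_succ_sub, horizontalWeight, verticalWeight]
  ring

lemma horizontalWeight_succ_add_verticalWeight (p : ℤ → ℕ) (k : ℕ) (m : ℤ) (s : ℕ) :
    horizontalWeight p k m (s + 1) + verticalWeight p k m s =
      p (m - s) / windowSum p (m + 1) k := by
  rw [show m - s = m + 1 - (s + 1 : ℕ) by push_cast; ring, ← windowCDF_succ_sub,
    horizontalWeight, verticalWeight]
  ring

lemma horizontalWeight_zero (p : ℤ → ℕ) (k : ℕ) (m : ℤ) :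
    horizontalWeight p k m 0 = p (m + 1) / windowSum p (m + 1) k := by
  simp [horizontalWeight, windowCDF, windowSum]

lemma horizontalWeight_nonneg (p : ℤ → ℕ) {k : ℕ} (m : ℤ) {s : ℕ} (hs : s < k) :
    0 ≤ horizontalWeight p k m s := by
  rw [horizontalWeight, windowCDF, windowCDF, sub_nonneg]
  obtain ⟨j, rfl⟩ : ∃ j, k = j + 1 := ⟨k - 1, by omega⟩
  have hsj : windowSum p m s ≤ windowSum p m j := windowSum_mono p m (by omega)
  have hjk : windowSum p m j ≤ windowSum p m (j + 1) := windowSum_mono p m (by omega)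
  have hs1 := windowSum_add_one_succ p m s
  have hj1 := windowSum_add_one_succ p m j
  rcases Nat.eq_zero_or_pos (windowSum p m (j + 1)) with hQ | hQ
  · simp only [hQ, CharP.cast_eq_zero, div_zero]
    positivity
  rcases Nat.eq_zero_or_pos (windowSum p (m + 1) (j + 1)) with hP | hP
  · simp only [show windowSum p m s = 0 by omega, CharP.cast_eq_zero, zero_div]
    positivity
  rw [div_le_div_iff₀ (by exact_mod_cast hQ) (by exact_mod_cast hP)]
  norm_cast
  rw [hs1, hj1]
  nlinarith

lemma verticalWeight_nonneg (hp : IsLogConcave p) {k : ℕ} {m : ℤ} {s : ℕ} (hs : s < k)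
    (hm : windowSum p m k ≠ 0) : 0 ≤ verticalWeight p k m s := by
  rw [verticalWeight, windowCDF, windowCDF, sub_nonneg]
  rcases Nat.eq_zero_or_pos (windowSum p (m + 1) k) with hP | hP
  · simp only [hP, CharP.cast_eq_zero, div_zero]
    positivity
  rw [div_le_div_iff₀ (by exact_mod_cast hP) (by positivity)]
  exact_mod_cast hp.windowSum_mul_le m hs

lemma div_windowSum_le_verticalWeight_self (hp : ∀ r < 0, p r = 0) {k m : ℕ} (hmk : m + 1 < k)
    (hm : windowSum p m k ≠ 0) : p 0 / windowSum p (m + 1) k ≤ verticalWeight p k m m := by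
  have hsub := windowCDF_succ_sub p k (m + 1) (m + 1)
  have hone : windowCDF p k m (m + 1) = 1 := by
    rw [windowCDF, windowSum_eq_of_lt hp (by omega) hmk.le, div_self (by exact_mod_cast hm)]
  have hle : windowCDF p k (m + 1) (m + 1 + 1) ≤ 1 :=
    div_le_one_of_le₀ (by exact_mod_cast windowSum_mono p _ hmk) (by positivity)
  push_cast at hsub hle
  rw [verticalWeight, hone]
  rw [show (m : ℤ) + 1 - (m + 1) = 0 by ring] at hsub
  linarith

end LogConcave

lemma levelCard_prod (rk : X → ℕ) (k : ℕ) (r : ℤ) :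
    levelCard (fun a : Fin k × X => (a.1 : ℕ) + rk a.2) r = windowSum (levelCard rk) r k := by
  simp only [levelCard, windowSum, card_filter, Fintype.sum_prod_type]
  rw [← Fin.sum_univ_eq_sum_range (fun s => ∑ x, if (rk x : ℤ) = r - s then 1 else 0)]
  refine sum_congr rfl fun s _ => sum_congr rfl fun x _ => ?_
  congr 1
  push_cast
  exact propext ⟨fun h => by omega, fun h => by omega⟩

lemma windowSum_levelCard_ne_zero (rk : X → ℕ) {k s : ℕ} (hs : s < k) (x : X) :
    windowSum (levelCard rk) (s + rk x : ℕ) k ≠ 0 := by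
  rw [← levelCard_prod]
  exact (levelCard_rank_pos _ ((⟨s, hs⟩ : Fin k), x)).ne'

lemma sum_fin_ite_val_eq (v : ℕ) (c : ℕ → ℝ) :
    ∑ t : Fin k, (if (t : ℕ) = v then c t else 0) = if v < k then c v else 0 := by
  rw [Fin.sum_univ_eq_sum_range (fun t => if t = v then c t else 0)]
  simp

section Product

variable [DecidableEq X] {rk : X → ℕ} {f : X → X → ℝ} {k : ℕ}

noncomputable def prodFlow (rk : X → ℕ) (f : X → X → ℝ) (k : ℕ) (a b : Fin k × X) : ℝ :=
  (if b.1 = a.1 then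
    horizontalWeight (levelCard rk) k ((a.1 : ℕ) + rk a.2 : ℕ) a.1 * f a.2 b.2 else 0) +
  if b.2 = a.2 ∧ (b.1 : ℕ) = a.1 + 1 then
    verticalWeight (levelCard rk) k ((a.1 : ℕ) + rk a.2 : ℕ) a.1 / levelCard rk (rk a.2) else 0

lemma prodFlow_nonneg [Preorder X] (hp : IsLogConcave (levelCard rk)) (hf : IsNormalizedFlow rk f)
    (a b : Fin k × X) : 0 ≤ prodFlow rk f k a b := by
  unfold prodFlow
  refine add_nonneg ?_ ?_ <;> split_ifs
  · exact mul_nonneg (horizontalWeight_nonneg _ _ a.1.isLt) (hf.nonneg _ _)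
  · exact le_rfl
  · exact div_nonneg (verticalWeight_nonneg hp a.1.isLt (windowSum_levelCard_ne_zero _ a.1.isLt _))
      (Nat.cast_nonneg _)
  · exact le_rfl

lemma prodFlow_ne_zero [Preorder X] (hf : IsNormalizedFlow rk f) {a b : Fin k × X}
    (h : prodFlow rk f k a b ≠ 0) :
    a ≤ b ∧ (b.1 : ℕ) + rk b.2 = (a.1 : ℕ) + rk a.2 + 1 := by
  unfold prodFlow at h
  by_cases h₁ : b.1 = a.1
  · have hv : ¬(b.2 = a.2 ∧ (b.1 : ℕ) = a.1 + 1) := fun h => by simp [h₁] at h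
    rw [if_pos h₁, if_neg hv, add_zero] at h
    obtain ⟨hle, hrk⟩ := hf.le_of_ne_zero (right_ne_zero_of_mul h)
    exact ⟨Prod.mk_le_mk.2 ⟨h₁.ge, hle⟩, by rw [h₁, hrk, add_assoc]⟩
  · rw [if_neg h₁, zero_add] at h
    by_cases h₂ : b.2 = a.2 ∧ (b.1 : ℕ) = a.1 + 1
    · exact ⟨Prod.mk_le_mk.2 ⟨Fin.le_def.2 (by omega), h₂.1.ge⟩, by rw [h₂.1, h₂.2]; ring⟩
    · exact absurd (if_neg h₂) h

lemma sum_prodFlow_left (s : Fin k) (x : X) :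
    ∑ b, prodFlow rk f k (s, x) b =
      horizontalWeight (levelCard rk) k ((s : ℕ) + rk x : ℕ) s * ∑ y, f x y +
      if (s : ℕ) + 1 < k then
        verticalWeight (levelCard rk) k ((s : ℕ) + rk x : ℕ) s / levelCard rk (rk x) else 0 := by
  simp only [prodFlow, sum_add_distrib, mul_sum]
  congr 1
  · simp [Fintype.sum_prod_type_right]
  · simp only [Fintype.sum_prod_type, ite_and, sum_ite_eq', mem_univ, if_true]
    exact sum_fin_ite_val_eq _ fun _ => _

lemma sum_prodFlow_right [Preorder X] (hf : IsNormalizedFlow rk f) (t : Fin k) (y : X) :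
    ∑ a, prodFlow rk f k a (t, y) =
      horizontalWeight (levelCard rk) k ((t : ℕ) + rk y - 1 : ℕ) t * ∑ x, f x y +
      if 1 ≤ (t : ℕ) then
        verticalWeight (levelCard rk) k ((t : ℕ) + rk y - 1 : ℕ) (t - 1) / levelCard rk (rk y)
      else 0 := by
  simp only [prodFlow, sum_add_distrib, mul_sum]
  congr 1
  · simp only [Fintype.sum_prod_type_right, sum_ite_eq, mem_univ, if_true]
    refine sum_congr rfl fun x _ => ?_
    by_cases hxy : f x y = 0
    · simp [hxy]
    · rw [(hf.le_of_ne_zero hxy).2]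
      simp
  · simp only [Fintype.sum_prod_type, ite_and, sum_ite_eq, mem_univ, if_true]
    have : ∀ s : ℕ, ((t : ℕ) = s + 1) ↔ (s = t - 1 ∧ 1 ≤ (t : ℕ)) := by omega
    simp only [this, ite_and]
    rw [sum_fin_ite_val_eq _ fun s => if 1 ≤ (t : ℕ) then
      verticalWeight (levelCard rk) k (s + rk y : ℕ) s / levelCard rk (rk y) else 0,
      if_pos (by omega)]
    split_ifs
    · rw [show (t : ℕ) - 1 + rk y = t + rk y - 1 by omega]
    · rfl

lemma sum_prodFlow_le [Preorder X] (hp : IsLogConcave (levelCard rk))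
    (hf : IsNormalizedFlow rk f) (a : Fin k × X) :
    ∑ b, prodFlow rk f k a b ≤
      (levelCard (fun a : Fin k × X => (a.1 : ℕ) + rk a.2) ((a.1 : ℕ) + rk a.2 : ℕ) : ℝ)⁻¹ := by
  obtain ⟨s, x⟩ := a
  set p := levelCard rk
  set m : ℤ := (((s : ℕ) + rk x : ℕ) : ℤ)
  have hx : (p (rk x) : ℝ) ≠ 0 := by exact_mod_cast (levelCard_rank_pos rk x).ne'
  have hsum := horizontalWeight_add_verticalWeight p k m s
  rw [show m - s = rk x by push_cast [m]; ring] at hsum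
  have hv : 0 ≤ verticalWeight p k m s / p (rk x) := by
    have := verticalWeight_nonneg hp s.isLt (windowSum_levelCard_ne_zero rk s.isLt x)
    positivity
  rw [sum_prodFlow_left, levelCard_prod]
  calc _ ≤ horizontalWeight p k m s * (p (rk x) : ℝ)⁻¹ + verticalWeight p k m s / p (rk x) := by
        gcongr
        · exact horizontalWeight_nonneg p m s.isLt
        · exact hf.sum_le x
        · split_ifs
          exacts [le_rfl, hv]
    _ = (windowSum p m k : ℝ)⁻¹ := by
        rw [← div_eq_mul_inv, ← add_div, hsum]
        field_simp

lemma inv_le_sum_prodFlow [Preorder X] (hf : IsNormalizedFlow rk f) (b : Fin k × X)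
    (hb : 0 < (b.1 : ℕ) + rk b.2) :
    (levelCard (fun a : Fin k × X => (a.1 : ℕ) + rk a.2) ((b.1 : ℕ) + rk b.2 : ℕ) : ℝ)⁻¹ ≤
      ∑ a, prodFlow rk f k a b := by
  obtain ⟨t, y⟩ := b
  obtain ⟨M, hM⟩ : ∃ M, (t : ℕ) + rk y = M + 1 := ⟨_, (Nat.succ_pred_eq_of_pos hb).symm⟩
  rw [sum_prodFlow_right hf, levelCard_prod, hM, Nat.add_sub_cancel, Nat.cast_succ]
  set p := levelCard rk
  have hy : (p (rk y) : ℝ) ≠ 0 := by exact_mod_cast (levelCard_rank_pos rk y).ne'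
  have hflow : 0 ≤ ∑ x, f x y := sum_nonneg fun x _ => hf.nonneg x y
  have hh : 0 ≤ horizontalWeight p k M t := horizontalWeight_nonneg p _ t.isLt
  -- If `rk y = 0`, only the step up from `(t - 1, y)` arrives; if `t = 0`, only the flow of `X`.
  rcases Nat.eq_zero_or_pos (rk y) with hy0 | hy0
  · have hW : windowSum p M k ≠ 0 := by
      have := windowSum_levelCard_ne_zero rk (show (t : ℕ) - 1 < k by omega) y
      rwa [show (t : ℕ) - 1 + rk y = M by omega] at this
    have hvert := div_windowSum_le_verticalWeight_self (p := p)
      (fun r hr => levelCard_of_neg rk hr) (show M + 1 < k by omega) hW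
    rw [if_pos (by omega), show (t : ℕ) - 1 = M by omega]
    rw [hy0, Nat.cast_zero] at hy ⊢
    calc _ = (p 0 / windowSum p (M + 1) k : ℝ) / p 0 := by field_simp
      _ ≤ verticalWeight p k M M / p 0 := by gcongr
      _ ≤ _ := le_add_of_nonneg_left (mul_nonneg hh hflow)
  have hin := hf.inv_le_sum y hy0
  rcases Nat.eq_zero_or_pos (t : ℕ) with ht0 | ht0
  · rw [if_neg (by omega), add_zero, ht0, horizontalWeight_zero]
    rw [show rk y = M + 1 by omega, Nat.cast_succ] at hy hin
    calc _ = (p (M + 1) / windowSum p (M + 1) k : ℝ) * (p (M + 1) : ℝ)⁻¹ := by field_simp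
      _ ≤ _ := by gcongr
  · have hsum := horizontalWeight_succ_add_verticalWeight p k M ((t : ℕ) - 1)
    rw [Nat.sub_add_cancel ht0, show (M : ℤ) - ((t : ℕ) - 1 : ℕ) = rk y by omega] at hsum
    rw [if_pos (Nat.one_le_iff_ne_zero.2 ht0.ne')]
    calc _ = (horizontalWeight p k M t + verticalWeight p k M ((t : ℕ) - 1)) / p (rk y) := by
          rw [hsum]; field_simp
      _ = horizontalWeight p k M t * (p (rk y) : ℝ)⁻¹ +
          verticalWeight p k M ((t : ℕ) - 1) / p (rk y) := by ring
      _ ≤ _ := by gcongr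

theorem IsNormalizedFlow.prod [Preorder X] (hp : IsLogConcave (levelCard rk))
    (hf : IsNormalizedFlow rk f) :
    IsNormalizedFlow (fun a : Fin k × X => (a.1 : ℕ) + rk a.2) (prodFlow rk f k) where
  nonneg := prodFlow_nonneg hp hf
  le_of_ne_zero _ _ h := prodFlow_ne_zero hf h
  sum_le := sum_prodFlow_le hp hf
  inv_le_sum := inv_le_sum_prodFlow hf

end Product

theorem IsNormalizedFlow.comp_orderIso {Y : Type*} [Fintype Y] [LE X] [LE Y] {rkY : Y → ℕ}
    {f : Y → Y → ℝ} (hf : IsNormalizedFlow rkY f) (e : X ≃o Y) {rkX : X → ℕ}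
    (h : ∀ x, rkY (e x) = rkX x) : IsNormalizedFlow rkX fun a b => f (e a) (e b) where
  nonneg _ _ := hf.nonneg _ _
  le_of_ne_zero a b hab := by
    obtain ⟨hle, hrk⟩ := hf.le_of_ne_zero hab
    exact ⟨e.le_iff_le.1 hle, by rw [← h, ← h, hrk]⟩
  sum_le a := by
    rw [levelCard_comp_equiv e.toEquiv h, ← h a]
    exact (e.toEquiv.sum_comp (f (e a))).trans_le (hf.sum_le (e a))
  inv_le_sum b hb := by
    rw [levelCard_comp_equiv e.toEquiv h, ← h b]
    exact (hf.inv_le_sum (e b) (h b ▸ hb)).trans_eq (e.toEquiv.sum_comp (f · (e b))).symm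

lemma isLogConcave_levelCard_of_forall_eq_zero {rk : X → ℕ} (h : ∀ x, rk x = 0) :
    IsLogConcave (levelCard rk) := by
  intro a b hba
  rcases eq_or_ne (a + 1) 0 with ha | ha
  · rw [levelCard_of_forall_eq_zero h (show b - 1 ≠ 0 by omega), mul_zero]
    exact Nat.zero_le _
  · rw [levelCard_of_forall_eq_zero h ha, zero_mul]
    exact Nat.zero_le _

lemma isNormalizedFlow_zero [LE X] {rk : X → ℕ} (h : ∀ x, rk x = 0) :
    IsNormalizedFlow rk 0 where
  nonneg _ _ := le_rfl
  le_of_ne_zero _ _ hxy := absurd rfl hxy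
  sum_le _ := by simp
  inv_le_sum y hy := absurd (h y) hy.ne'

theorem isLogConcave_and_isNormalizedFlow_pi : ∀ {n : ℕ} (k : Fin n → ℕ),
    IsLogConcave (levelCard fun x : (∀ i, Fin (k i)) => ∑ i, (x i : ℕ)) ∧
      ∃ f, IsNormalizedFlow (fun x : (∀ i, Fin (k i)) => ∑ i, (x i : ℕ)) f
  | 0, _ => ⟨isLogConcave_levelCard_of_forall_eq_zero fun _ => by simp, _,
      isNormalizedFlow_zero fun _ => by simp⟩
  | n + 1, k => by
    obtain ⟨hp, f, hf⟩ := isLogConcave_and_isNormalizedFlow_pi fun i : Fin n => k i.succ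
    have hrk : ∀ x : (∀ i, Fin (k i)),
        ((Fin.consOrderIso _).symm x).1 + ∑ i, (((Fin.consOrderIso _).symm x).2 i : ℕ) =
          ∑ i, (x i : ℕ) :=
      fun x => (Fin.sum_univ_succ fun i => (x i : ℕ)).symm
    refine ⟨?_, _, (hf.prod hp (k := k 0)).comp_orderIso _ hrk⟩
    have := isLogConcave_windowSum hp (k 0)
    simp only [← levelCard_prod] at this
    convert this using 1
    exact funext (levelCard_comp_equiv (Fin.consOrderIso _).symm.toEquiv hrk)

end MultisetLYM

/-- LYM inequality for antichains in the product poset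
L(k₁,…,kₙ) = {0,…,k₁-1} × ⋯ × {0,…,kₙ-1}. -/
theorem multiset_LYM (n : ℕ) (k : Fin n → ℕ) (F : Finset (∀ i, Fin (k i)))
    (hF : IsAntichain (· ≤ ·) (F : Set (∀ i, Fin (k i)))) :
    ∑ i ∈ Finset.range (∑ j, (k j - 1) + 1),
      (((F.filter (fun x => ∑ j, ((x j : ℕ)) = i)).card : ℝ) /
        ((Finset.univ.filter (fun x : ∀ i, Fin (k i) => ∑ j, ((x j : ℕ)) = i)).card : ℝ)) ≤ 1 := by
  obtain ⟨-, f, hf⟩ := MultisetLYM.isLogConcave_and_isNormalizedFlow_pi k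
  exact hf.sum_card_div_le_one _ fun z hz w hw hzw => by rw [hF.eq hz hw hzw]
end

section
/- Let F be a k-Sperner family of vectors in L(k₁,…,kₙ). Then |F| ≤ f(k₁,…,kₙ,k), where f(k₁,…,kₙ,k) is the sum of the k largest among the rank sizes |L_i|. -/
/-!
The poset `L(k₁,…,kₙ)` has a symmetric chain decomposition (de Bruijn, Tengbergen and
Kruyswijk): it is a disjoint union of chains `C`, each with exactly one element of every rank
`r, r + 1, …, N - r`, where `N = ∑ (kⱼ - 1)` is the top rank. A `k`-Sperner family meets such a
chain in at most `min k |C|` elements, while the `k` ranks around `N / 2` meet it in at least that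
many, because the chain is centred at `N / 2`. Summing over the chains bounds the family by the
size of the `k` middle ranks.

The decomposition is built one factor at a time: for a symmetric chain `C` and the chain
`{0, …, m - 1}`, the grid `{0, …, m - 1} × C` splits into nested L-shaped hooks, each again a
symmetric chain.
-/

open Finset

variable {α β : Type*}

/-- `le_of_rank_le` makes `C` a chain on which `rk` is injective, so `C` has exactly one element
of each rank `r, …, N - r`. -/
structure IsSymmChainAt [LE α] (rk : α → ℕ) (N r : ℕ) (C : Finset α) : Prop where
  two_mul_le : 2 * r ≤ N
  le_of_rank_le : ∀ x ∈ C, ∀ y ∈ C, rk x ≤ rk y → x ≤ y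
  image_rank : C.image rk = Icc r (N - r)

structure IsSymmChainDecomp [LE α] (rk : α → ℕ) (N : ℕ) (D : Finset (Finset α)) : Prop where
  exists_isSymmChainAt : ∀ C ∈ D, ∃ r, IsSymmChainAt rk N r C
  exists_mem : ∀ x, ∃ C ∈ D, x ∈ C
  pairwiseDisjoint : (D : Set (Finset α)).PairwiseDisjoint id

lemma injOn_of_rank_le_imp_le [PartialOrder α] {rk : α → ℕ} {s : Set α}
    (h : ∀ x ∈ s, ∀ y ∈ s, rk x ≤ rk y → x ≤ y) : s.InjOn rk :=
  fun x hx y hy hxy => le_antisymm (h x hx y hy hxy.le) (h y hy x hx hxy.ge)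

namespace IsSymmChainAt

variable {rk : α → ℕ} {N r : ℕ} {C : Finset α}

lemma rank_mem [LE α] (h : IsSymmChainAt rk N r C) {x : α} (hx : x ∈ C) :
    r ≤ rk x ∧ rk x ≤ N - r :=
  mem_Icc.1 (h.image_rank ▸ mem_image_of_mem rk hx)

lemma exists_rank_eq [LE α] (h : IsSymmChainAt rk N r C) {i : ℕ} (hr : r ≤ i) (hN : i ≤ N - r) :
    ∃ x ∈ C, rk x = i :=
  mem_image.1 (h.image_rank ▸ mem_Icc.2 ⟨hr, hN⟩)

lemma card_eq [PartialOrder α] (h : IsSymmChainAt rk N r C) : #C = N + 1 - 2 * r := by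
  rw [← card_image_of_injOn (injOn_of_rank_le_imp_le h.le_of_rank_le), h.image_rank,
    Nat.card_Icc]
  omega

end IsSymmChainAt

def middleRanks (N k : ℕ) : Finset ℕ :=
  Ico ((N + 1 - k) / 2) (min ((N + 1 - k) / 2 + k) (N + 1))

lemma middleRanks_subset_range (N k : ℕ) : middleRanks N k ⊆ range (N + 1) := by
  rw [range_eq_Ico]
  exact Ico_subset_Ico (Nat.zero_le _) (min_le_right _ _)

lemma card_middleRanks_le (N k : ℕ) : #(middleRanks N k) ≤ k := by
  rw [middleRanks, Nat.card_Ico]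
  omega

lemma IsSymmChainAt.min_le_card_filter_middleRanks [PartialOrder α] {rk : α → ℕ} {N r : ℕ}
    {C : Finset α} (h : IsSymmChainAt rk N r C) (k : ℕ) :
    min k #C ≤ #{x ∈ C | rk x ∈ middleRanks N k} := by
  have hinj := injOn_of_rank_le_imp_le h.le_of_rank_le
  rw [← card_image_of_injOn (hinj.mono (filter_subset _ C)),
    ← filter_image (p := (· ∈ middleRanks N k)), h.image_rank, filter_mem_eq_inter, h.card_eq,
    middleRanks, ← Ico_add_one_right_eq_Icc, Ico_inter_Ico, Nat.card_Ico]
  have := h.two_mul_le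
  omega

def IsKSperner [Preorder α] (k : ℕ) (F : Finset α) : Prop :=
  ¬ ∃ c : Fin (k + 1) → α, StrictMono c ∧ ∀ j, c j ∈ F

namespace IsKSperner

variable {k : ℕ} {F G : Finset α}

lemma mono [Preorder α] (hF : IsKSperner k F) (hG : G ⊆ F) : IsKSperner k G :=
  fun ⟨c, hc, hcG⟩ => hF ⟨c, hc, fun j => hG (hcG j)⟩

lemma card_le_of_rank_le_imp_le [PartialOrder α] (hF : IsKSperner k F) {rk : α → ℕ}
    (hchain : ∀ x ∈ F, ∀ y ∈ F, rk x ≤ rk y → x ≤ y) : #F ≤ k := by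
  by_contra! hlt
  have hinj := injOn_of_rank_le_imp_le hchain
  obtain ⟨t, htF, htcard⟩ := exists_subset_card_eq (s := F.image rk) (n := k + 1)
    (by rw [card_image_of_injOn hinj]; omega)
  choose c hcF hcrk using fun j => mem_image.1 (htF (t.orderEmbOfFin_mem htcard j))
  refine hF ⟨c, fun i j hij => ?_, hcF⟩
  have hlt : rk (c i) < rk (c j) := by
    simpa only [hcrk] using (t.orderEmbOfFin htcard).strictMono hij
  exact (hchain _ (hcF i) _ (hcF j) hlt.le).lt_of_ne fun h => hlt.ne (congrArg rk h)

end IsKSperner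

namespace IsSymmChainDecomp

variable {rk : α → ℕ} {N : ℕ} {D : Finset (Finset α)}

lemma card_eq_sum_card_inter [LE α] [DecidableEq α] (hD : IsSymmChainDecomp rk N D)
    (s : Finset α) : #s = ∑ C ∈ D, #(s ∩ C) := by
  have hs : s = D.biUnion (s ∩ ·) := by
    ext x
    simp only [mem_biUnion, mem_inter]
    exact ⟨fun hx => (hD.exists_mem x).imp fun C hC => ⟨hC.1, hx, hC.2⟩,
      fun ⟨_, _, hx, _⟩ => hx⟩
  conv_lhs => rw [hs]
  exact card_biUnion (hD.pairwiseDisjoint.mono_on fun C _ => inter_subset_right)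

theorem card_le_sum_card_middleRanks [PartialOrder α] [Fintype α] [DecidableEq α]
    (hD : IsSymmChainDecomp rk N D) {k : ℕ} {F : Finset α} (hF : IsKSperner k F) :
    #F ≤ ∑ i ∈ middleRanks N k, #{x | rk x = i} := by
  calc #F = ∑ C ∈ D, #(F ∩ C) := hD.card_eq_sum_card_inter F
    _ ≤ ∑ C ∈ D, #{x ∈ C | rk x ∈ middleRanks N k} := sum_le_sum fun C hC => by
        obtain ⟨r, hC⟩ := hD.exists_isSymmChainAt C hC
        refine le_trans (le_min ?_ (card_le_card inter_subset_right))
          (hC.min_le_card_filter_middleRanks k)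
        exact (hF.mono inter_subset_left).card_le_of_rank_le_imp_le
          fun x hx y hy => hC.le_of_rank_le x (mem_inter.1 hx).2 y (mem_inter.1 hy).2
    _ = #{x | rk x ∈ middleRanks N k} := by
        rw [hD.card_eq_sum_card_inter]
        simp only [filter_inter, univ_inter]
    _ = ∑ i ∈ middleRanks N k, #{x | rk x = i} := by
        rw [card_eq_sum_card_fiberwise (f := rk) (t := middleRanks N k)
          fun x hx => by simpa using hx]
        refine sum_congr rfl fun i hi => congrArg card ?_
        ext x
        simp only [mem_filter, mem_univ, true_and, and_iff_right_iff_imp]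
        exact fun hx => hx ▸ hi

end IsSymmChainDecomp

section Hook

variable {rk : α → ℕ} {m N r t : ℕ} {C : Finset α}

/-- The `t`-th hook of the grid `Fin m × C`: the elements of `C` of rank `r + t` paired with
`v ≤ m - 1 - t`, then the elements of higher rank paired with `m - 1 - t`. -/
def hook (rk : α → ℕ) (m r t : ℕ) (C : Finset α) : Finset (Fin m × α) :=
  {p ∈ univ ×ˢ C | min (rk p.2 - r) (m - 1 - p.1) = t}

lemma mem_hook {p : Fin m × α} :
    p ∈ hook rk m r t C ↔ p.2 ∈ C ∧ min (rk p.2 - r) (m - 1 - p.1) = t := by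
  simp [hook]

lemma IsSymmChainAt.hook [PartialOrder α] (h : IsSymmChainAt rk N r C) (htN : t ≤ N - 2 * r)
    (htm : t < m) :
    IsSymmChainAt (fun p : Fin m × α => p.1 + rk p.2) (m - 1 + N) (r + t) (hook rk m r t C) where
  two_mul_le := by have := h.two_mul_le; omega
  le_of_rank_le := by
    rintro ⟨v, x⟩ hp ⟨w, y⟩ hq hle
    rw [mem_hook] at hp hq
    dsimp only at hle hp hq
    have := h.rank_mem hp.1
    have := h.rank_mem hq.1
    have := v.isLt
    have := w.isLt
    exact Prod.mk_le_mk.2 ⟨Fin.le_def.2 (by omega), h.le_of_rank_le x hp.1 y hq.1 (by omega)⟩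
  image_rank := by
    have := h.two_mul_le
    ext s
    simp only [mem_image, mem_Icc, Prod.exists, mem_hook]
    constructor
    · rintro ⟨v, x, ⟨hx, hxt⟩, rfl⟩
      have := h.rank_mem hx
      have := v.isLt
      omega
    · rintro ⟨hs₁, hs₂⟩
      by_cases hcorner : s ≤ r + (m - 1)
      · obtain ⟨x, hx, hxr⟩ := h.exists_rank_eq (i := r + t) (by omega) (by omega)
        exact ⟨⟨s - (r + t), by omega⟩, x, ⟨hx, by simp only; omega⟩, by simp only; omega⟩
      · obtain ⟨x, hx, hxr⟩ := h.exists_rank_eq (i := s - (m - 1 - t)) (by omega) (by omega)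
        exact ⟨⟨m - 1 - t, by omega⟩, x, ⟨hx, by simp only; omega⟩, by simp only; omega⟩

theorem IsSymmChainDecomp.prod_fin [PartialOrder α] [DecidableEq α] {D : Finset (Finset α)}
    (hD : IsSymmChainDecomp rk N D) (hm : 0 < m) : ∃ D' : Finset (Finset (Fin m × α)),
      IsSymmChainDecomp (fun p : Fin m × α => p.1 + rk p.2) (m - 1 + N) D' := by
  choose! r hr using hD.exists_isSymmChainAt
  refine ⟨D.biUnion fun C => (range (min (N - 2 * r C) (m - 1) + 1)).image (hook rk m (r C) · C),
    ⟨?_, ?_, ?_⟩⟩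
  · simp only [mem_biUnion, mem_image, mem_range]
    rintro _ ⟨C, hC, t, ht, rfl⟩
    exact ⟨_, (hr C hC).hook (by omega) (by omega)⟩
  · rintro ⟨v, x⟩
    obtain ⟨C, hC, hx⟩ := hD.exists_mem x
    refine ⟨hook rk m (r C) (min (rk x - r C) (m - 1 - v)) C,
      mem_biUnion.2 ⟨C, hC, mem_image.2 ⟨_, mem_range.2 ?_, rfl⟩⟩, mem_hook.2 ⟨hx, rfl⟩⟩
    have := (hr C hC).rank_mem hx
    omega
  · intro A hA B hB hAB
    obtain ⟨C, hC, hA⟩ := mem_biUnion.1 hA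
    obtain ⟨t, -, rfl⟩ := mem_image.1 hA
    obtain ⟨C', hC', hB⟩ := mem_biUnion.1 hB
    obtain ⟨t', -, rfl⟩ := mem_image.1 hB
    refine disjoint_left.2 fun p hp hp' => hAB ?_
    simp only [id_eq, mem_hook] at hp hp'
    obtain rfl : C = C' :=
      hD.pairwiseDisjoint.elim hC hC' (not_disjoint_iff.2 ⟨p.2, hp.1, hp'.1⟩)
    rw [← hp.2, ← hp'.2]

end Hook

section Transport

variable [LE α] [LE β] (e : α ≃o β) {rk : α → ℕ} {rk' : β → ℕ} (hrk : ∀ a, rk' (e a) = rk a)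
  {N : ℕ}
include hrk

lemma IsSymmChainAt.map {r : ℕ} {C : Finset α} (h : IsSymmChainAt rk N r C) :
    IsSymmChainAt rk' N r (C.map e.toEquiv.toEmbedding) where
  two_mul_le := h.two_mul_le
  le_of_rank_le := by
    simp only [forall_mem_map]
    intro x hx y hy
    simpa [hrk] using h.le_of_rank_le x hx y hy
  image_rank := by
    rw [← h.image_rank]
    ext i
    simp only [mem_image, mem_map_equiv]
    exact ⟨fun ⟨b, hb, hbi⟩ => ⟨e.symm b, hb, by rw [← hrk, e.apply_symm_apply, hbi]⟩,
      fun ⟨a, ha, hai⟩ => ⟨e a, by simpa using ha, (hrk a).trans hai⟩⟩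

lemma IsSymmChainDecomp.map {D : Finset (Finset α)} (hD : IsSymmChainDecomp rk N D) :
    IsSymmChainDecomp rk' N (D.map (mapEmbedding e.toEquiv.toEmbedding).toEmbedding) where
  exists_isSymmChainAt := by
    simp only [forall_mem_map]
    intro C hC
    obtain ⟨r, h⟩ := hD.exists_isSymmChainAt C hC
    exact ⟨r, h.map e hrk⟩
  exists_mem b := by
    obtain ⟨C, hC, hb⟩ := hD.exists_mem (e.symm b)
    exact ⟨_, mem_map_of_mem _ hC, by simpa using hb⟩
  pairwiseDisjoint := by
    rw [coe_map, (Function.Embedding.injective _).injOn.pairwiseDisjoint_image]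
    exact fun C hC C' hC' hne => (disjoint_map _).2 (hD.pairwiseDisjoint hC hC' hne)

end Transport

lemma isSymmChainDecomp_singleton_univ [Preorder α] [Fintype α] [Unique α] {rk : α → ℕ}
    (hrk : ∀ x, rk x = 0) : IsSymmChainDecomp rk 0 {univ} where
  exists_isSymmChainAt C hC := by
    refine ⟨0, le_rfl, fun x _ y _ _ => (Subsingleton.elim x y).le, ?_⟩
    rw [mem_singleton.1 hC, univ_unique, image_singleton, hrk]
    rfl
  exists_mem x := ⟨univ, mem_singleton_self _, mem_univ x⟩
  pairwiseDisjoint := by simp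

theorem exists_isSymmChainDecomp_pi_fin : ∀ {n : ℕ} (kk : Fin n → ℕ), (∀ i, 0 < kk i) →
    ∃ D : Finset (Finset (∀ i, Fin (kk i))),
      IsSymmChainDecomp (fun x => ∑ j, (x j : ℕ)) (∑ j, (kk j - 1)) D
  | 0, _, _ => ⟨{univ}, isSymmChainDecomp_singleton_univ fun _ => Fin.sum_univ_zero _⟩
  | _ + 1, kk, hkk => by
    obtain ⟨D, hD⟩ := exists_isSymmChainDecomp_pi_fin (fun i => kk i.succ) fun i => hkk _
    obtain ⟨D', hD'⟩ := hD.prod_fin (hkk 0)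
    rw [Fin.sum_univ_succ]
    exact ⟨_, hD'.map (Fin.consOrderIso fun i => Fin (kk i)) fun p => by simp [Fin.sum_univ_succ]⟩

/-- A k-Sperner family in L(k₁,…,kₙ) has size at most the sum of the k largest
rank sizes |L_i| (expressed as the maximum of ∑_{i ∈ S} |L_i| over index sets S
with at most k elements). -/
theorem kSperner_card_le (n : ℕ) (kk : Fin n → ℕ) (k : ℕ)
    (F : Finset (∀ i, Fin (kk i)))
    (hF : ¬ ∃ c : Fin (k + 1) → (∀ i, Fin (kk i)), StrictMono c ∧ ∀ j, c j ∈ F) :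
    F.card ≤
      ((Finset.range (∑ j, (kk j - 1) + 1)).powerset.filter (fun S => S.card ≤ k)).sup
        (fun S => ∑ i ∈ S,
          (Finset.univ.filter (fun x : ∀ i, Fin (kk i) => ∑ j, ((x j : ℕ)) = i)).card) := by
  by_cases hkk : ∀ i, 0 < kk i
  · obtain ⟨D, hD⟩ := exists_isSymmChainDecomp_pi_fin kk hkk
    refine le_sup_of_le (b := middleRanks _ k) ?_ (hD.card_le_sum_card_middleRanks hF)
    exact mem_filter.2 ⟨mem_powerset.2 (middleRanks_subset_range _ k), card_middleRanks_le _ k⟩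
  · obtain ⟨i, hi⟩ := not_forall.1 hkk
    have : IsEmpty (∀ i, Fin (kk i)) := ⟨fun x => absurd (x i).isLt (by omega)⟩
    simp [eq_empty_of_isEmpty F]
end

section
/- In the product poset L(k₁,…,kₙ), the sequence of rank sizes |L_i| is symmetric: |L_i| = |L_{N-i}| where N = ∑_{j=1}^n (k_j - 1), and it is non-decreasing for i ≤ ⌊N/2⌋. -/
/-!
Record the rank sizes as a function `r : ℤ → ℕ`. Adding a coordinate with `k` values replaces `r`
by its window sum `m ↦ ∑_{t<k} r (m - t)` (the rank generating function gets multiplied by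
`1 + q + ⋯ + q^(k-1)`). A window sum of a sequence that is symmetric about `N/2` and
non-decreasing up to `N/2` is symmetric about `(N + k - 1)/2` and non-decreasing up to there:
sliding the window one step to the right trades `r (i - k + 1)` for `r (i + 1)`, and the latter is
larger, by monotonicity or, past the centre, after reflecting `i + 1`. Induct on `n`, starting
from the one-point poset.
-/

open Finset

variable {M : Type*} [AddCommMonoid M]

def windowSum (k : ℕ) (f : ℤ → M) (m : ℤ) : M := ∑ t ∈ range k, f (m - t)

@[simp]
theorem windowSum_zero (f : ℤ → M) : windowSum 0 f = 0 := by
  funext m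
  simp [windowSum]

theorem windowSum_add_one_reflect {N : ℤ} {f : ℤ → M} (hf : ∀ i, f (N - i) = f i) (m : ℕ)
    (i : ℤ) : windowSum (m + 1) f (N + m - i) = windowSum (m + 1) f i := by
  unfold windowSum
  rw [← sum_range_reflect]
  refine sum_congr rfl fun t ht => ?_
  have ht : t ≤ m := Nat.lt_succ_iff.mp (mem_range.mp ht)
  rw [← hf (i - t)]
  congr 1
  push_cast [Nat.add_sub_cancel, ht]
  ring

theorem windowSum_add_one_le [PartialOrder M] [IsOrderedAddMonoid M] {f : ℤ → M} (m : ℕ)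
    {i : ℤ} (h : f (i - m) ≤ f (i + 1)) :
    windowSum (m + 1) f i ≤ windowSum (m + 1) f (i + 1) := by
  unfold windowSum
  rw [sum_range_succ, sum_range_succ']
  simp only [Nat.cast_add, Nat.cast_one, add_sub_add_right_eq_sub, Nat.cast_zero, sub_zero]
  exact add_le_add_right h _

structure IsSymmUnimodal [PartialOrder M] (N : ℤ) (f : ℤ → M) : Prop where
  symm : ∀ i, f (N - i) = f i
  monotoneOn : MonotoneOn f (Set.Iic (N / 2))

theorem IsSymmUnimodal.windowSum [PartialOrder M] [IsOrderedAddMonoid M] {N : ℤ} {f : ℤ → M}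
    (hf : IsSymmUnimodal N f) (k : ℕ) : IsSymmUnimodal (N + (k - 1 : ℕ)) (windowSum k f) := by
  cases k with
  | zero => exact ⟨fun _ => by simp, fun _ _ _ _ _ => by simp⟩
  | succ m =>
    rw [Nat.add_sub_cancel]
    refine ⟨windowSum_add_one_reflect hf.symm m, ?_⟩
    refine monotoneOn_of_le_succ Set.ordConnected_Iic fun i _ _ hi => ?_
    rw [Order.succ_eq_add_one] at hi ⊢
    rw [Set.mem_Iic] at hi
    refine windowSum_add_one_le m ?_
    by_cases hmid : i + 1 ≤ N / 2
    · exact hf.monotoneOn (Set.mem_Iic.mpr (by omega)) hmid (by omega)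
    · rw [← hf.symm (i + 1)]
      exact hf.monotoneOn (Set.mem_Iic.mpr (by omega)) (Set.mem_Iic.mpr (by omega)) (by omega)

def rankSize {n : ℕ} (k : Fin n → ℕ) (m : ℤ) : ℕ :=
  #{x : ∀ i, Fin (k i) | ∑ j, ((x j : ℕ) : ℤ) = m}

theorem rankSize_zero (k : Fin 0 → ℕ) (m : ℤ) : rankSize k m = if m = 0 then 1 else 0 := by
  simp only [rankSize, univ_unique, Fin.sum_univ_zero, filter_singleton, eq_comm]
  split_ifs <;> rfl

theorem rankSize_succ {n : ℕ} (k : Fin (n + 1) → ℕ) :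
    rankSize k = windowSum (k 0) (rankSize (Fin.tail k)) := by
  funext m
  simp only [rankSize, windowSum, card_filter]
  rw [← (Fin.consEquiv fun i => Fin (k i)).sum_comp, Fintype.sum_prod_type,
    ← Fin.sum_univ_eq_sum_range]
  refine Fintype.sum_congr _ _ fun t => Fintype.sum_congr _ _ fun y => ?_
  simp only [Fin.consEquiv_apply, Fin.sum_univ_succ, Fin.cons_zero, Fin.cons_succ, Fin.tail]
  simp only [eq_sub_iff_add_eq, add_comm]

theorem isSymmUnimodal_rankSize {n : ℕ} (k : Fin n → ℕ) :
    IsSymmUnimodal (∑ j, (k j - 1) : ℕ) (rankSize k) := by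
  induction n with
  | zero =>
    simp only [univ_eq_empty, sum_empty, Nat.cast_zero, funext (rankSize_zero k)]
    refine ⟨fun i => by simp [neg_eq_zero], fun i _ j hj hij => ?_⟩
    rw [Set.mem_Iic] at hj
    split_ifs <;> omega
  | succ n ih =>
    rw [rankSize_succ, Fin.sum_univ_succ, Nat.cast_add, add_comm]
    exact (ih (Fin.tail k)).windowSum (k 0)

theorem rank_sizes_symmetric_unimodal_general (n : ℕ) (k : Fin n → ℕ) :
    (∀ i ≤ ∑ j, (k j - 1),
      (Finset.univ.filter (fun x : ∀ i, Fin (k i) => ∑ j, ((x j : ℕ)) = i)).card =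
      (Finset.univ.filter
        (fun x : ∀ i, Fin (k i) => ∑ j, ((x j : ℕ)) = (∑ j, (k j - 1)) - i)).card) ∧
    (∀ i j, i ≤ j → j ≤ (∑ j, (k j - 1)) / 2 →
      (Finset.univ.filter (fun x : ∀ i, Fin (k i) => ∑ l, ((x l : ℕ)) = i)).card ≤
      (Finset.univ.filter (fun x : ∀ i, Fin (k i) => ∑ l, ((x l : ℕ)) = j)).card) := by
  have hrank (i : ℕ) :
      #{x : ∀ i, Fin (k i) | ∑ j, (x j : ℕ) = i} = rankSize k i := by
    simp only [rankSize, ← Nat.cast_sum, Nat.cast_inj]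
  obtain ⟨hsymm, hmono⟩ := isSymmUnimodal_rankSize k
  refine ⟨fun i hi => ?_, fun i j hij hj => ?_⟩
  · rw [hrank, hrank, Nat.cast_sub hi, hsymm]
  · rw [hrank, hrank]
    exact hmono (Set.mem_Iic.mpr (by omega)) (Set.mem_Iic.mpr (by omega)) (by omega)

/-- In L(k₁,…,kₙ) the rank sizes |L_i| are symmetric (|L_i| = |L_{N-i}| with
N = ∑ (k_j - 1)) and non-decreasing for i ≤ ⌊N/2⌋. -/
theorem rank_sizes_symmetric_unimodal (n : ℕ) (k : Fin n → ℕ) (hk : ∀ i, 1 ≤ k i) :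
    (∀ i ≤ ∑ j, (k j - 1),
      (Finset.univ.filter (fun x : ∀ i, Fin (k i) => ∑ j, ((x j : ℕ)) = i)).card =
      (Finset.univ.filter
        (fun x : ∀ i, Fin (k i) => ∑ j, ((x j : ℕ)) = (∑ j, (k j - 1)) - i)).card) ∧
    (∀ i j, i ≤ j → j ≤ (∑ j, (k j - 1)) / 2 →
      (Finset.univ.filter (fun x : ∀ i, Fin (k i) => ∑ l, ((x l : ℕ)) = i)).card ≤
      (Finset.univ.filter (fun x : ∀ i, Fin (k i) => ∑ l, ((x l : ℕ)) = j)).card) :=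
  rank_sizes_symmetric_unimodal_general n k
end

section
/- With Tᵢ(αᵢ) independent as defined, for every integer ℓ ≥ 1 one has Q_{2ℓ}(T₁(α₁)+⋯+Tₙ(αₙ)) = P(T₁(α₁)+⋯+Tₙ(αₙ) ∈ (-ℓ, ℓ]); that is, the supremum in the concentration function is attained at the interval (-ℓ, ℓ] symmetric about the origin. -/
open MeasureTheory ProbabilityTheory
open scoped ENNReal NNReal

/-!
Call `f : ℤ → ℝ≥0∞` parity-unimodal if it is even and decreases in steps of 2 away from the
origin. Convolving with `ν^k` averages `f` over an arithmetic progression of `k` terms and step 2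
centred at `m`; moving the progression 2 further from the origin trades its innermost term for an
outer one of the same parity, so parity-unimodality is preserved. Hence the law of
`T₁ + ⋯ + Tₙ`, an iterated convolution of mixtures of the `ν^k`, is parity-unimodal. For such a
law, sliding a window of `2ℓ` consecutive integers one step away from the centre again trades a
point for a farther one of the same parity (the window length is even), so the window of largest
mass is the centred one, `(-ℓ, ℓ]`.
-/

structure ParityUnimodal (f : ℤ → ℝ≥0∞) : Prop where
  neg_eq : ∀ m, f (-m) = f m
  add_two_le : ∀ m, 0 ≤ m → f (m + 2) ≤ f m

noncomputable def arithSum (f : ℤ → ℝ≥0∞) (b s : ℤ) (k : ℕ) : ℝ≥0∞ :=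
  ∑ i ∈ Finset.range k, f (b + s * i)

lemma arithSum_reverse (f : ℤ → ℝ≥0∞) (b s : ℤ) (k : ℕ) :
    arithSum f (b + s * (k - 1)) (-s) k = arithSum f b s k := by
  rw [arithSum, ← Finset.sum_range_reflect]
  refine Finset.sum_congr rfl fun i hi => ?_
  have hik : ((k - 1 - i : ℕ) : ℤ) = k - 1 - i := by simp at hi; omega
  rw [hik]
  ring_nf

lemma arithSum_reflect {f : ℤ → ℝ≥0∞} (hf : ∀ m, f (-m) = f m) (b s : ℤ) (k : ℕ) :
    arithSum f b s k = arithSum f (-(b + s * (k - 1))) s k := by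
  rw [← arithSum_reverse f b s k, arithSum, arithSum]
  refine Finset.sum_congr rfl fun i _ => ?_
  rw [← hf]
  ring_nf

namespace ParityUnimodal

variable {f g : ℤ → ℝ≥0∞}

lemma add_two_mul_le (hf : ParityUnimodal f) {c : ℤ} (hc : 0 ≤ c) (t : ℕ) :
    f (c + 2 * t) ≤ f c := by
  induction t with
  | zero => simp
  | succ t ih =>
    calc f (c + 2 * (t + 1 : ℕ)) = f (c + 2 * t + 2) := by push_cast; ring_nf
      _ ≤ f (c + 2 * t) := hf.add_two_le _ (by positivity)
      _ ≤ f c := ih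

lemma apply_le (hf : ParityUnimodal f) {a b : ℤ} (hab : |a| ≤ b) (hpar : 2 ∣ b - a) :
    f b ≤ f a := by
  have habs : f |a| = f a := by
    rcases abs_choice a with h | h <;> rw [h]
    exact hf.neg_eq a
  obtain ⟨t, ht⟩ : 2 ∣ b - |a| := by
    rcases abs_choice a with h | h <;> rw [h] <;> omega
  rw [← habs, show b = |a| + 2 * (t.toNat : ℕ) by omega]
  exact hf.add_two_mul_le (abs_nonneg a) _

lemma add (hf : ParityUnimodal f) (hg : ParityUnimodal g) : ParityUnimodal (f + g) :=
  ⟨fun m => by simp [hf.neg_eq, hg.neg_eq],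
    fun m hm => add_le_add (hf.add_two_le m hm) (hg.add_two_le m hm)⟩

lemma smul (hf : ParityUnimodal f) (c : ℝ≥0∞) : ParityUnimodal (c • f) :=
  ⟨fun m => by simp [hf.neg_eq], fun m hm => mul_le_mul_right (hf.add_two_le m hm) c⟩

lemma arithSum_add_le (hf : ParityUnimodal f) {b s : ℤ} {k : ℕ} (hb : |b| ≤ b + s * k)
    (hpar : 2 ∣ s * k) : arithSum f (b + s) s k ≤ arithSum f b s k := by
  rcases k with _ | k
  · simp [arithSum]
  rw [arithSum, arithSum, Finset.sum_range_succ, Finset.sum_range_succ']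
  push_cast at hb hpar ⊢
  refine add_le_add (le_of_eq (Finset.sum_congr rfl fun i _ => by ring_nf)) ?_
  simpa using hf.apply_le (a := b) (b := b + s + s * k) (by linarith)
    (by convert hpar using 1; ring)

lemma arithSum_two (hf : ParityUnimodal f) (k : ℕ) :
    ParityUnimodal (fun m => arithSum f (m + 1 - k) 2 k) := by
  refine ⟨fun m => ?_, fun m hm => ?_⟩
  · rw [arithSum_reflect hf.neg_eq]
    ring_nf
  · calc arithSum f (m + 2 + 1 - k) 2 k = arithSum f (m + 1 - k + 2) 2 k := by ring_nf
      _ ≤ arithSum f (m + 1 - k) 2 k :=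
        hf.arithSum_add_le (abs_le.2 ⟨by omega, by omega⟩) (dvd_mul_right 2 _)

lemma arithSum_one_le (hf : ParityUnimodal f) (ℓ : ℕ) (a : ℤ) :
    arithSum f a 1 (2 * ℓ) ≤ arithSum f (1 - ℓ) 1 (2 * ℓ) := by
  have shift (b : ℤ) (hb : -ℓ ≤ b) :
      arithSum f (b + 1) 1 (2 * ℓ) ≤ arithSum f b 1 (2 * ℓ) :=
    hf.arithSum_add_le (abs_le.2 ⟨by push_cast; omega, by push_cast; omega⟩)
      ⟨ℓ, by push_cast; ring⟩
  have right (a : ℤ) (ha : 1 - ℓ ≤ a) :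
      arithSum f a 1 (2 * ℓ) ≤ arithSum f (1 - ℓ) 1 (2 * ℓ) := by
    induction a, ha using Int.leInduction with
    | base => rfl
    | succ a ha ih => exact (shift a (by omega)).trans ih
  rcases le_or_gt (1 - ℓ : ℤ) a with ha | ha
  · exact right a ha
  · -- a window left of the centre is the mirror image of one right of it
    rw [arithSum_reflect hf.neg_eq]
    exact right _ (by push_cast; omega)

end ParityUnimodal

noncomputable def intMeasure : (ℤ → ℝ≥0∞) →ₗ[ℝ≥0∞] Measure ℝ where
  toFun f := Measure.sum fun m => f m • Measure.dirac (m : ℝ)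
  map_add' f g := by
    ext s hs
    simp [Measure.sum_apply _ hs, add_mul, ENNReal.tsum_add]
  map_smul' c f := by
    ext s hs
    simp [Measure.sum_apply _ hs, mul_assoc, ENNReal.tsum_mul_left]

instance (f : ℤ → ℝ≥0∞) : SFinite (intMeasure f) := by
  dsimp [intMeasure]; infer_instance

lemma intMeasure_apply (f : ℤ → ℝ≥0∞) {s : Set ℝ} (hs : MeasurableSet s) :
    intMeasure f s = ∑' m, (((↑) : ℤ → ℝ) ⁻¹' s).indicator f m := by
  simp only [intMeasure, LinearMap.coe_mk, AddHom.coe_mk, Measure.sum_apply _ hs,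
    Measure.smul_apply, Measure.dirac_apply' _ hs, smul_eq_mul]
  refine tsum_congr fun m => ?_
  by_cases hm : (m : ℝ) ∈ s <;> simp [hm]

lemma intMeasure_Ioc (f : ℤ → ℝ≥0∞) (x : ℝ) (L : ℕ) :
    intMeasure f (Set.Ioc x (x + L)) = arithSum f (⌊x⌋ + 1) 1 L := by
  rw [intMeasure_apply f measurableSet_Ioc, Int.preimage_Ioc, Int.floor_add_natCast,
    ← Finset.coe_Ioc, ← sum_eq_tsum_indicator, Int.Ioc_eq_finset_map, Finset.sum_map]
  simp [arithSum]

lemma intMeasure_single_zero : intMeasure (Pi.single 0 1) = Measure.dirac 0 := by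
  ext s hs
  rw [intMeasure_apply _ hs, tsum_eq_single 0 fun m hm => by simp [hm]]
  by_cases h0 : (0 : ℝ) ∈ s <;> simp [h0]

lemma intMeasure_map_const_add (f : ℤ → ℝ≥0∞) (c : ℤ) :
    (intMeasure f).map ((c : ℝ) + ·) = intMeasure fun m => f (m - c) := by
  ext s hs
  rw [Measure.map_apply (measurable_const_add _) hs,
    intMeasure_apply _ (measurable_const_add _ hs), intMeasure_apply _ hs,
    ← (Equiv.addLeft c).tsum_eq (f := (((↑) : ℤ → ℝ) ⁻¹' s).indicator _)]
  refine tsum_congr fun m => ?_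
  by_cases hm : (c : ℝ) + m ∈ s <;> simp [hm]

lemma finsetSum_conv {ι : Type*} (s : Finset ι) (μ : ι → Measure ℝ) [∀ i, SFinite (μ i)]
    (ν : Measure ℝ) [SFinite ν] : (∑ i ∈ s, μ i) ∗ ν = ∑ i ∈ s, μ i ∗ ν := by
  classical
  induction s using Finset.induction_on with
  | empty => simp
  | insert a s ha ih =>
    have : SFinite (∑ i ∈ s, μ i) := by rw [← Measure.sum_coe_finset]; infer_instance
    rw [Finset.sum_insert ha, Finset.sum_insert ha, Measure.add_conv, ih]

lemma nu_conv_intMeasure (f : ℤ → ℝ≥0∞) (k : ℕ) :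
    nu k ∗ intMeasure f = intMeasure ((k : ℝ≥0∞)⁻¹ • fun m => arithSum f (m + 1 - k) 2 k) := by
  have hatom (i : ℕ) : (2 * (i : ℝ) - k + 1) = ((2 * i - k + 1 : ℤ) : ℝ) := by push_cast; ring
  simp_rw [nu, Measure.conv_smul_left, finsetSum_conv, Measure.dirac_conv, hatom,
    intMeasure_map_const_add, ← map_sum, map_smul]
  congr 2
  funext m
  rw [Finset.sum_apply, ← arithSum_reverse]
  refine Finset.sum_congr rfl fun i _ => ?_
  ring_nf

lemma ParityUnimodal.exists_Tdist_conv {f : ℤ → ℝ≥0∞} (hf : ParityUnimodal f) (α : ℝ) :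
    ∃ g, ParityUnimodal g ∧ Tdist α ∗ intMeasure f = intMeasure g :=
  ⟨_, (((hf.arithSum_two _).smul _).smul _).add (((hf.arithSum_two _).smul _).smul _), by
    rw [Tdist, Measure.add_conv, Measure.conv_smul_left, Measure.conv_smul_left,
      nu_conv_intMeasure, nu_conv_intMeasure, ← map_smul, ← map_smul, ← map_add]⟩

lemma parityUnimodal_single_zero : ParityUnimodal (Pi.single 0 1) :=
  ⟨fun m => by simp [Pi.single_apply], fun m hm => by
    rw [Pi.single_eq_of_ne (by omega)]; exact zero_le⟩

lemma map_sum_pi_fin_succ {n : ℕ} (μ : Fin (n + 1) → Measure ℝ) [∀ i, SigmaFinite (μ i)] :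
    (Measure.pi μ).map (fun y => ∑ i, y i) =
      μ 0 ∗ (Measure.pi fun j : Fin n => μ j.succ).map (fun y => ∑ j, y j) := by
  have hsum : Measurable fun y : Fin n → ℝ => ∑ j, y j := by fun_prop
  have hsplit : (fun y : Fin (n + 1) → ℝ => ∑ i, y i) =
      (fun p : ℝ × ℝ => p.1 + p.2) ∘ Prod.map id (fun y : Fin n → ℝ => ∑ j, y j) ∘
        MeasurableEquiv.piFinSuccAbove (fun _ => ℝ) 0 := by
    funext y
    simp [MeasurableEquiv.piFinSuccAbove, Fin.sum_univ_succ, Fin.tail]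
  rw [hsplit, ← Measure.map_map (by fun_prop) (by fun_prop),
    ← Measure.map_map (by fun_prop) (MeasurableEquiv.measurable _),
    (measurePreserving_piFinSuccAbove μ 0).map_eq, ← Measure.map_prod_map _ _ measurable_id hsum,
    Measure.map_id]
  simp only [Fin.succAbove_zero]
  rfl

lemma exists_map_sum_pi_Tdist_eq_intMeasure {n : ℕ} (α : Fin n → ℝ) :
    ∃ f, ParityUnimodal f ∧
      (Measure.pi fun i => Tdist (α i)).map (fun y => ∑ i, y i) = intMeasure f := by
  induction n with
  | zero =>
    refine ⟨Pi.single 0 1, parityUnimodal_single_zero, ?_⟩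
    rw [Measure.pi_of_empty, Measure.map_dirac' (by fun_prop)]
    simp [intMeasure_single_zero]
  | succ n ih =>
    obtain ⟨f, hf, hmap⟩ := ih fun j => α j.succ
    obtain ⟨g, hg, hconv⟩ := hf.exists_Tdist_conv (α 0)
    exact ⟨g, hg, by rw [map_sum_pi_fin_succ, hmap, hconv]⟩

lemma ParityUnimodal.conc_intMeasure {f : ℤ → ℝ≥0∞} (hf : ParityUnimodal f) (ℓ : ℕ) :
    conc (intMeasure f) (2 * ℓ) = intMeasure f (Set.Ioc (-ℓ) ℓ) := by
  have hwin (x : ℝ) : intMeasure f (Set.Ioc x (x + 2 * ℓ)) = arithSum f (⌊x⌋ + 1) 1 (2 * ℓ) := by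
    exact_mod_cast intMeasure_Ioc f x (2 * ℓ)
  have hcenter : Set.Ioc (-(ℓ : ℝ)) ℓ = Set.Ioc (-(ℓ : ℝ)) (-(ℓ : ℝ) + 2 * ℓ) := by ring_nf
  rw [conc, hcenter]
  refine le_antisymm (iSup_le fun x => ?_)
    (le_iSup (fun x : ℝ => intMeasure f (Set.Ioc x (x + 2 * ℓ))) (-(ℓ : ℝ)))
  rw [hwin, hwin, show ⌊-(ℓ : ℝ)⌋ + 1 = 1 - ℓ by simp [Int.floor_neg]; ring]
  exact hf.arithSum_one_le ℓ _

theorem conc_Tsum_attained_general (n : ℕ) (α : Fin n → ℝ) (ℓ : ℕ) :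
    conc ((Measure.pi fun i : Fin n => Tdist (α i)).map (fun y => ∑ i, y i)) (2 * ℓ) =
      (Measure.pi fun i : Fin n => Tdist (α i))
        {y | (∑ i, y i) ∈ Set.Ioc (-(ℓ : ℝ)) ℓ} := by
  obtain ⟨f, hf, hmap⟩ := exists_map_sum_pi_Tdist_eq_intMeasure α
  have hsum : Measurable fun y : Fin n → ℝ => ∑ i, y i := by fun_prop
  rw [hmap, hf.conc_intMeasure, ← hmap, Measure.map_apply hsum measurableSet_Ioc]
  rfl

/-- For independent Tᵢ(αᵢ) the concentration function Q_{2ℓ} is attained at the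
symmetric interval (-ℓ, ℓ]. -/
theorem conc_Tsum_attained (n : ℕ) (α : Fin n → ℝ) (hα : ∀ i, α i ∈ Set.Ioc (0 : ℝ) 1)
    (ℓ : ℕ) (hℓ : 1 ≤ ℓ) :
    conc ((Measure.pi fun i : Fin n => Tdist (α i)).map (fun y => ∑ i, y i)) (2 * ℓ) =
      (Measure.pi fun i : Fin n => Tdist (α i))
        {y | (∑ i, y i) ∈ Set.Ioc (-(ℓ : ℝ)) ℓ} :=
  conc_Tsum_attained_general n α ℓ
end

section
/- For independent Poisson random variables η₁, η₂ each with mean λ > 0, one has P(η₁ - η₂ ∈ {0, 1}) ≤ √(2/(πλ)). -/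
open MeasureTheory ProbabilityTheory
open scoped ENNReal NNReal
open Real
open scoped Nat

/-!
With `N = η₁ + η₂ ∼ Po(2λ)`, conditionally on `N = m` the variable `η₁` is binomial `B(m, 1/2)`,
and the event of the theorem is `η₁ = ⌊N / 2⌋`; so its probability is `E[C(N, ⌊N/2⌋) / 2 ^ N]`.
Wallis' inequality gives `(C(m, ⌊m/2⌋) / 2 ^ m) ^ 2 ≤ 4 / (π (m + 1))`, and AM-GM at the point
`a = √(4 / (2πλ))` bounds the expectation by `(a + 4 / (π a) · E[1 / (N + 1)]) / 2 ≤ a`,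
since `E[1 / (N + 1)] = (1 - e^(-2λ)) / (2λ)`.
-/

lemma centralBinom_sq_mul_pi_le (n : ℕ) :
    (n.centralBinom : ℝ) ^ 2 * π * (2 * n + 1) ^ 2 ≤ 4 * (n + 1) * 4 ^ (2 * n) := by
  have hW := Wallis.le_W n
  have hfac : ((2 * n)! : ℝ) = n.centralBinom * n ! ^ 2 := by
    have := Nat.choose_mul_factorial_mul_factorial (by omega : n ≤ 2 * n)
    rw [show 2 * n - n = n by omega, ← Nat.centralBinom_eq_two_mul_choose] at this
    rw [← this]; push_cast; ring
  have hC : (0 : ℝ) < n.centralBinom := by exact_mod_cast n.centralBinom_pos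
  rw [Wallis.W_eq_factorial_ratio, hfac, show (2 : ℝ) ^ (4 * n) = 4 ^ (2 * n) by
      rw [pow_mul, pow_mul]; norm_num,
    div_mul_eq_mul_div, div_le_div_iff₀ (by positivity) (by positivity)] at hW
  have hpos : (0 : ℝ) < n ! ^ 4 := by positivity
  nlinarith

lemma two_mul_choose_two_mul_add_one (k : ℕ) : 2 * (2 * k + 1).choose k = (k + 1).centralBinom := by
  rw [Nat.centralBinom_eq_two_mul_choose, show 2 * (k + 1) = 2 * k + 1 + 1 by ring,
    Nat.choose_succ_succ, Nat.choose_symm_half]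
  ring

lemma sq_choose_half_div_two_pow_le (m : ℕ) :
    ((m.choose (m / 2) : ℝ) / 2 ^ m) ^ 2 ≤ 4 / (π * (m + 1)) := by
  have h4 : ((2 : ℝ) ^ m) ^ 2 = 4 ^ m := by rw [← pow_mul, mul_comm, pow_mul]; norm_num
  rw [div_pow, h4, div_le_div_iff₀ (by positivity) (by positivity)]
  obtain ⟨k, rfl | rfl⟩ := m.even_or_odd'
  · have h := centralBinom_sq_mul_pi_le k
    rw [show 2 * k / 2 = k by omega, ← Nat.centralBinom_eq_two_mul_choose]
    push_cast
    refine le_of_mul_le_mul_right ?_ (by positivity : (0 : ℝ) < 2 * k + 1)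
    have : (0 : ℝ) ≤ 4 ^ (2 * k) * k := by positivity
    nlinarith
  · have h := centralBinom_sq_mul_pi_le (k + 1)
    rw [← two_mul_choose_two_mul_add_one, show 2 * (k + 1) = 2 * k + 1 + 1 by ring,
      pow_succ (4 : ℝ) (2 * k + 1)] at h
    rw [show (2 * k + 1) / 2 = k by omega]
    push_cast at h ⊢
    refine le_of_mul_le_mul_right ?_ (by positivity : (0 : ℝ) < (2 * k + 3) ^ 2)
    have h' := mul_le_mul_of_nonneg_left h (by positivity : (0 : ℝ) ≤ 2 * k + 2)
    have : (0 : ℝ) ≤ 4 ^ (2 * k + 1) * (2 * k ^ 2 + 6 * k + 5) := by positivity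
    nlinarith

lemma poissonPMF_apply (r : ℝ≥0) (n : ℕ) : poissonPMF r n = ENNReal.ofReal (Po(r).real {n}) := by
  rw [poissonMeasure_real_singleton, ← poissonPMFReal_ofReal_eq_poissonPMF, poissonPMFReal]

lemma poissonMeasure_real_singleton_mul (r : ℝ≥0) (j k : ℕ) :
    Po(r).real {j} * Po(r).real {k} =
      Po(2 * r).real {j + k} * ((j + k).choose j / 2 ^ (j + k)) := by
  have hchoose := Nat.choose_mul_factorial_mul_factorial (Nat.le_add_right j k)
  rw [Nat.add_sub_cancel_left] at hchoose
  have hchoose_ne : ((j + k).choose j : ℝ) ≠ 0 := by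
    exact_mod_cast (Nat.choose_pos (Nat.le_add_right j k)).ne'
  simp only [poissonMeasure_real_singleton]
  rw [← hchoose]
  push_cast
  rw [show -(2 * (r : ℝ)) = -r + -r by ring, exp_add]
  field_simp
  ring

lemma poissonPMF_mul_poissonPMF (r : ℝ≥0) (j k : ℕ) :
    poissonPMF r j * poissonPMF r k =
      ENNReal.ofReal (Po(2 * r).real {j + k} * ((j + k).choose j / 2 ^ (j + k))) := by
  rw [poissonPMF_apply, poissonPMF_apply, ← ENNReal.ofReal_mul measureReal_nonneg,
    poissonMeasure_real_singleton_mul]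

lemma hasSum_poissonMeasure_real_singleton (r : ℝ≥0) : HasSum (fun n ↦ Po(r).real {n}) 1 := by
  simpa only [poissonMeasure_real_singleton] using hasSum_one_poissonMeasure r

lemma hasSum_poissonMeasure_real_singleton_div_succ {r : ℝ≥0} (hr : 0 < r) :
    HasSum (fun n : ℕ ↦ Po(r).real {n} / (n + 1)) ((1 - exp (-r)) / r) := by
  have hshift (n : ℕ) : Po(r).real {n} / (n + 1) = Po(r).real {n + 1} / r := by
    simp only [poissonMeasure_real_singleton, Nat.factorial_succ]
    have : (r : ℝ) ≠ 0 := by positivity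
    push_cast
    field_simp
    ring
  have htail : HasSum (fun n ↦ Po(r).real {n + 1}) (1 - exp (-r)) := by
    have := (hasSum_nat_add_iff' 1).mpr (hasSum_poissonMeasure_real_singleton r)
    simpa [poissonMeasure_real_singleton] using this
  simpa only [hshift] using htail.div_const (r : ℝ)

lemma tsum_ofReal_poissonMeasure_mul_choose_half_le {r : ℝ≥0} (hr : 0 < r) :
    ∑' m : ℕ, ENNReal.ofReal (Po(r).real {m} * (m.choose (m / 2) / 2 ^ m)) ≤
      ENNReal.ofReal √(4 / (π * r)) := by
  set a := √(4 / (π * r))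
  have ha : 0 < a := by positivity
  have ha_sq : a ^ 2 = 4 / (π * r) := sq_sqrt (by positivity)
  set g : ℕ → ℝ := fun m ↦ (a * Po(r).real {m} + 4 / (π * a) * (Po(r).real {m} / (m + 1))) / 2
  have hg : HasSum g ((a + 4 / (π * a) * ((1 - exp (-r)) / r)) / 2) := by
    simpa only [mul_one] using (((hasSum_poissonMeasure_real_singleton r).mul_left a).add
      ((hasSum_poissonMeasure_real_singleton_div_succ hr).mul_left (4 / (π * a)))).div_const 2
  have hfg (m : ℕ) : Po(r).real {m} * (m.choose (m / 2) / 2 ^ m) ≤ g m := by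
    have hc := sq_choose_half_div_two_pow_le m
    set c : ℝ := m.choose (m / 2) / 2 ^ m
    have hamgm : c ≤ (a + c ^ 2 / a) / 2 := by
      rw [le_div_iff₀ two_pos, add_div' _ _ _ ha.ne', le_div_iff₀ ha]
      nlinarith [sq_nonneg (c - a)]
    calc Po(r).real {m} * c ≤ Po(r).real {m} * ((a + 4 / (π * (m + 1)) / a) / 2) := by
          gcongr
          exact hamgm.trans (by gcongr)
      _ = g m := by simp only [g]; field_simp
  have hsum_le : ∑' m, g m ≤ a := by
    have hb : 4 / (π * a) / r = a := by
      rw [div_div, div_eq_iff (by positivity), show a * (π * a * r) = a ^ 2 * (π * r) by ring, ha_sq,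
        div_mul_cancel₀ _ (by positivity)]
    calc ∑' m, g m = (a + 4 / (π * a) / r * (1 - exp (-r))) / 2 := by rw [hg.tsum_eq]; ring
      _ = (a + a * (1 - exp (-r))) / 2 := by rw [hb]
      _ ≤ a := by nlinarith [exp_pos (-r)]
  calc ∑' m : ℕ, ENNReal.ofReal (Po(r).real {m} * (m.choose (m / 2) / 2 ^ m))
      ≤ ∑' m, ENNReal.ofReal (g m) := ENNReal.tsum_le_tsum fun m ↦ ENNReal.ofReal_le_ofReal (hfg m)
    _ = ENNReal.ofReal (∑' m, g m) :=
      (ENNReal.ofReal_tsum_of_nonneg (fun m ↦ by positivity) hg.summable).symm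
    _ ≤ ENNReal.ofReal a := ENNReal.ofReal_le_ofReal hsum_le

/-- For i.i.d. Poisson(λ) variables η₁, η₂ with λ > 0,
P(η₁ - η₂ ∈ {0,1}) ≤ √(2/(πλ)). -/
theorem skellam_bound (lam : ℝ≥0) (hlam : 0 < lam) :
    (∑' j : ℕ, poissonPMF lam j * (poissonPMF lam j + poissonPMF lam (j + 1))) ≤
      ENNReal.ofReal (Real.sqrt (2 / (Real.pi * lam))) := by
  set F : ℕ → ℝ≥0∞ := fun m ↦ ENNReal.ofReal (Po(2 * lam).real {m} * (m.choose (m / 2) / 2 ^ m))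
  have hsplit (j : ℕ) :
      poissonPMF lam j * (poissonPMF lam j + poissonPMF lam (j + 1)) = F (2 * j) + F (2 * j + 1) := by
    rw [mul_add, poissonPMF_mul_poissonPMF, poissonPMF_mul_poissonPMF,
      show j + j = 2 * j by ring, show j + (j + 1) = 2 * j + 1 by ring]
    simp only [F, show 2 * j / 2 = j by omega, show (2 * j + 1) / 2 = j by omega]
  calc ∑' j, poissonPMF lam j * (poissonPMF lam j + poissonPMF lam (j + 1))
      = ∑' m, F m := by
        rw [tsum_congr hsplit, ENNReal.tsum_add, tsum_even_add_odd ENNReal.summable ENNReal.summable]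
    _ ≤ ENNReal.ofReal √(4 / (π * (2 * lam : ℝ≥0))) :=
        tsum_ofReal_poissonMeasure_mul_choose_half_le (by positivity)
    _ = ENNReal.ofReal √(2 / (π * lam)) := by
        congr 2
        push_cast
        field_simp
        ring
end

section
/- Let X₁,…,Xₙ be independent random variables, each uniformly distributed on {-1, 1} (i.e., αᵢ = 1/2, kᵢ = 2 in the general theorem). Then for every x ∈ ℝ, P(X₁+⋯+Xₙ ∈ (x-1, x+1]) ≤ binomial(n, ⌊n/2⌋)/2ⁿ. (Erdős's Littlewood–Offord inequality as a special case.) -/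
/-!
By independence, the law of `(X₁, …, Xₙ)` is the image of the uniform measure on sign patterns
`ε : Fin n → Bool`, so the probability in question is the number of patterns whose signed sum
lies in `(x - 1, x + 1]`, divided by `2ⁿ`. The signed sum of a pattern with `k` plus signs is
`2k - n`, so patterns with different `k` have sums at distance at least `2`: all patterns counted
share one `k`, and there are `C(n, k) ≤ C(n, ⌊n/2⌋)` of them.
-/
open MeasureTheory ProbabilityTheory Finset
open scoped ENNReal

noncomputable def signOf (b : Bool) : ℝ := if b then 1 else -1

lemma measurable_signOf : Measurable signOf := measurable_from_top

section Combinatorics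

variable {ι : Type*} [Fintype ι]

lemma sum_signOf (ε : ι → Bool) :
    ∑ i, signOf (ε i) = 2 * #{i | ε i} - Fintype.card ι := by
  have hsplit : ∀ b : Bool, signOf b = 2 * (if b then 1 else 0) - 1 := by
    intro b; cases b <;> norm_num [signOf]
  simp only [hsplit, sum_sub_distrib, ← mul_sum, sum_boole, sum_const, card_univ, nsmul_one]

variable [DecidableEq ι]

lemma card_filter_card_eq_le_choose (k : ℕ) :
    #{ε : ι → Bool | #{i | ε i} = k} ≤ (Fintype.card ι).choose k := by
  rw [← card_univ, ← card_powersetCard]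
  refine card_le_card_of_injOn (fun ε => ({i | ε i} : Finset ι)) (fun ε hε => ?_)
    fun ε _ ε' _ h => ?_
  · simpa using hε
  · funext i
    simpa using congrArg (i ∈ ·) h

lemma eq_of_two_mul_sub_mem_Ioc {k l m : ℕ} {x : ℝ}
    (hk : 2 * (k : ℝ) - m ∈ Set.Ioc (x - 1) (x + 1))
    (hl : 2 * (l : ℝ) - m ∈ Set.Ioc (x - 1) (x + 1)) : k = l := by
  obtain ⟨hk₁, hk₂⟩ := hk
  obtain ⟨hl₁, hl₂⟩ := hl
  have : (k : ℝ) < l + 1 := by linarith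
  have : (l : ℝ) < k + 1 := by linarith
  norm_cast at *
  omega

theorem card_sum_signOf_mem_Ioc_le (x : ℝ) :
    #{ε : ι → Bool | ∑ i, signOf (ε i) ∈ Set.Ioc (x - 1) (x + 1)} ≤
      (Fintype.card ι).choose (Fintype.card ι / 2) := by
  obtain hempty | ⟨ε₀, hε₀⟩ := Finset.eq_empty_or_nonempty
    {ε : ι → Bool | ∑ i, signOf (ε i) ∈ Set.Ioc (x - 1) (x + 1)}
  · rw [hempty, card_empty]
    exact Nat.zero_le _
  calc _ ≤ #{ε : ι → Bool | #{i | ε i} = #{i | ε₀ i}} := by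
        refine card_le_card fun ε hε => ?_
        simp only [mem_filter, mem_univ, true_and, sum_signOf] at hε hε₀ ⊢
        exact eq_of_two_mul_sub_mem_Ioc hε hε₀
    _ ≤ (Fintype.card ι).choose #{i | ε₀ i} := card_filter_card_eq_le_choose _
    _ ≤ _ := Nat.choose_le_middle _ _

end Combinatorics

lemma map_signOf_uniformOn_univ :
    (uniformOn Set.univ : Measure Bool).map signOf =
      (2 : ℝ≥0∞)⁻¹ • (Measure.dirac (-1) + Measure.dirac 1) := by
  have huniform : (uniformOn Set.univ : Measure Bool) =
      (2 : ℝ≥0∞)⁻¹ • (Measure.dirac false + Measure.dirac true) := by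
    rw [Measure.ext_iff_singleton]
    intro b
    rw [uniformOn_univ]
    cases b <;> simp
  rw [huniform, Measure.map_smul, Measure.map_add _ _ measurable_signOf,
    Measure.map_dirac' measurable_signOf, Measure.map_dirac' measurable_signOf]
  rfl

lemma map_fun_eq_map_uniformOn_univ {Ω ι : Type*} [Fintype ι] [MeasurableSpace Ω]
    {P : Measure Ω} [IsProbabilityMeasure P] {X : ι → Ω → ℝ} (hmeas : ∀ i, Measurable (X i))
    (hindep : iIndepFun X P)
    (hunif : ∀ i, P.map (X i) = (2 : ℝ≥0∞)⁻¹ • (Measure.dirac (-1) + Measure.dirac 1)) :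
    P.map (fun ω i => X i ω) = (uniformOn Set.univ).map (fun (ε : ι → Bool) i => signOf (ε i)) := by
  rw [(iIndepFun_iff_map_fun_eq_pi_map fun i => (hmeas i).aemeasurable).1 hindep,
    ← Set.pi_univ Set.univ, uniformOn_pi, Measure.pi_map_pi fun _ => measurable_signOf.aemeasurable]
  simp only [hunif, map_signOf_uniformOn_univ]

/-- Erdős's Littlewood–Offord inequality: for independent uniform ±1 variables,
P(X₁+⋯+Xₙ ∈ (x-1, x+1]) ≤ C(n, ⌊n/2⌋)/2ⁿ. -/
theorem erdos_littlewood_offord {Ω : Type*} [MeasurableSpace Ω]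
    (P : Measure Ω) [IsProbabilityMeasure P]
    (n : ℕ) (X : Fin n → Ω → ℝ) (hmeas : ∀ i, Measurable (X i))
    (hindep : iIndepFun X P)
    (hunif : ∀ i, P.map (X i) = (2 : ℝ≥0∞)⁻¹ • (Measure.dirac (-1) + Measure.dirac 1))
    (x : ℝ) :
    P {ω | (∑ i, X i ω) ∈ Set.Ioc (x - 1) (x + 1)} ≤
      (n.choose (n / 2) : ℝ≥0∞) / 2 ^ n := by
  have hA : MeasurableSet {y : Fin n → ℝ | ∑ i, y i ∈ Set.Ioc (x - 1) (x + 1)} :=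
    measurableSet_preimage (by fun_prop) measurableSet_Ioc
  calc P {ω | (∑ i, X i ω) ∈ Set.Ioc (x - 1) (x + 1)}
      = P.map (fun ω i => X i ω) {y | ∑ i, y i ∈ Set.Ioc (x - 1) (x + 1)} :=
        (Measure.map_apply (measurable_pi_lambda _ hmeas) hA).symm
    _ = (#{ε : Fin n → Bool | ∑ i, signOf (ε i) ∈ Set.Ioc (x - 1) (x + 1)} : ℝ≥0∞) / 2 ^ n := by
        rw [map_fun_eq_map_uniformOn_univ hmeas hindep hunif, Measure.map_apply .of_discrete hA,
          uniformOn_univ, Set.preimage_ofPred_eq, ← coe_filter_univ, Measure.count_apply_finset]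
        simp only [Fintype.card_fun, Fintype.card_bool, Fintype.card_fin, Nat.cast_pow,
          Nat.cast_ofNat]
    _ ≤ (n.choose (n / 2) : ℝ≥0∞) / 2 ^ n := by
        gcongr
        exact_mod_cast Fintype.card_fin n ▸ card_sum_signOf_mem_Ioc_le x
end

section
/- Let X₁,…,Xₙ be independent real random variables each uniform on two points at distance at least 2 (i.e., Xᵢ uniform on {aᵢ, bᵢ} with |aᵢ - bᵢ| ≥ 2). Then for every integer ℓ ≥ 1 and x ∈ ℝ, P(X₁+⋯+Xₙ ∈ (x-ℓ, x+ℓ]) ≤ 2^{-n} ∑ (binomial coefficients n choose j over the ℓ middle values of j), which equals P(ε₁+⋯+εₙ ∈ (-ℓ, ℓ]) for i.i.d. uniform εᵢ ∈ {-1,1}. -/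
open MeasureTheory ProbabilityTheory
open scoped ENNReal NNReal

/-! Erdős's argument. Ordering each pair as `vᵢ < uᵢ`, the sum `∑ Xᵢ` is distributed as
`φ A = ∑ vᵢ + ∑_{i ∈ A} (uᵢ - vᵢ)` for a uniformly random `A ⊆ Fin n`, and `φ` grows by at least `2`
along strict inclusions. So the level `⌈(φ A - x + ℓ) / 2⌉ ∈ [1, ℓ]` splits the sets with
`φ A ∈ (x - ℓ, x + ℓ]` into `ℓ` antichains. Summing the LYM inequality over them gives
`∑ⱼ |𝒜ⱼ| / C(n, j) ≤ ℓ`, and together with `|𝒜ⱼ| ≤ C(n, j)` this bounds `|𝒜|` by the sum of the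
`ℓ` largest binomial coefficients, which counts the sign vectors with `∑ εᵢ ∈ (-ℓ, ℓ]`. -/

open Finset

namespace Nat

theorem choose_le_choose_of_le_of_le_half {n a b : ℕ} (hab : a ≤ b) (hb : b ≤ n / 2) :
    n.choose a ≤ n.choose b := by
  induction b, hab using Nat.le_induction with
  | base => rfl
  | succ b _ ih => exact (ih (by omega)).trans (choose_le_succ_of_lt_half_left (by omega))

theorem choose_le_choose_of_abs_le {n j k : ℕ} (h : |2 * (k : ℤ) - n| ≤ |2 * (j : ℤ) - n|) :
    n.choose j ≤ n.choose k := by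
  rcases lt_or_ge n j with hj | hj
  · simp [choose_eq_zero_of_lt hj]
  rw [abs_eq_max_neg, abs_eq_max_neg] at h
  have hk : k ≤ n := by omega
  have choose_eq_min : ∀ i ≤ n, n.choose i = n.choose (min i (n - i)) := fun i hi => by
    rcases le_total i (n - i) with h | h
    · rw [min_eq_left h]
    · rw [min_eq_right h, choose_symm hi]
  rw [choose_eq_min j hj, choose_eq_min k hk]
  exact choose_le_choose_of_le_of_le_half (by omega) (by omega)

end Nat

theorem Finset.sum_le_sum_of_sum_div_le {ι 𝕜 : Type*} [Field 𝕜] [LinearOrder 𝕜]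
    [IsStrictOrderedRing 𝕜] {s J : Finset ι} {m w : ι → 𝕜} (hJs : J ⊆ s) (hJ : J.Nonempty)
    (hw : ∀ j ∈ s, 0 < w j) (hm : ∀ j ∈ s, 0 ≤ m j) (hmw : ∀ j ∈ J, m j ≤ w j)
    (hwJ : ∀ j ∈ s, j ∉ J → ∀ k ∈ J, w j ≤ w k) (hsum : ∑ j ∈ s, m j / w j ≤ #J) :
    ∑ j ∈ s, m j ≤ ∑ j ∈ J, w j := by
  classical
  -- `w k` separates the weights outside `J` from those inside
  obtain ⟨k, hkJ, hk⟩ := J.exists_min_image w hJ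
  have div_mul_eq : ∀ j ∈ s, m j / w j * w j = m j := fun j hj => div_mul_cancel₀ _ (hw j hj).ne'
  have outside : ∑ j ∈ s \ J, m j ≤ (∑ j ∈ s \ J, m j / w j) * w k := by
    rw [sum_mul]
    refine sum_le_sum fun j hj => ?_
    obtain ⟨hjs, hjJ⟩ := mem_sdiff.mp hj
    calc m j = m j / w j * w j := (div_mul_eq j hjs).symm
      _ ≤ m j / w j * w k :=
        mul_le_mul_of_nonneg_left (hwJ j hjs hjJ k hkJ) (div_nonneg (hm j hjs) (hw j hjs).le)
  have inside : ((#J : 𝕜) - ∑ j ∈ J, m j / w j) * w k ≤ ∑ j ∈ J, (w j - m j) := by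
    rw [card_eq_sum_ones, Nat.cast_sum, Nat.cast_one, ← sum_sub_distrib, sum_mul]
    refine sum_le_sum fun j hj => ?_
    have hws := hw j (hJs hj)
    calc (1 - m j / w j) * w k ≤ (1 - m j / w j) * w j :=
          mul_le_mul_of_nonneg_left (hk j hj) (by rw [sub_nonneg, div_le_one hws]; exact hmw j hj)
      _ = w j - m j := by rw [sub_mul, one_mul, div_mul_eq j (hJs hj)]
  have budget : ∑ j ∈ s \ J, m j / w j ≤ #J - ∑ j ∈ J, m j / w j := by
    linarith [sum_sdiff hJs (f := fun j => m j / w j)]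
  calc ∑ j ∈ s, m j = ∑ j ∈ s \ J, m j + ∑ j ∈ J, m j := (sum_sdiff hJs).symm
    _ ≤ ∑ j ∈ J, (w j - m j) + ∑ j ∈ J, m j := by
        gcongr
        exact outside.trans ((mul_le_mul_of_nonneg_right budget (hw k (hJs hkJ)).le).trans inside)
    _ = ∑ j ∈ J, w j := by rw [← sum_add_distrib]; simp

-- the `j` for which a sign vector with `j` entries `+1` has `∑ εᵢ = 2 j - n ∈ (-ℓ, ℓ]`
def centralIndices (n ℓ : ℕ) : Finset ℕ :=
  {j ∈ range (n + 1) | n < 2 * j + ℓ ∧ 2 * j ≤ n + ℓ}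

theorem centralIndices_subset_range (n ℓ : ℕ) : centralIndices n ℓ ⊆ range (n + 1) :=
  filter_subset _ _

theorem card_centralIndices (n ℓ : ℕ) : #(centralIndices n ℓ) = min ℓ (n + 1) := by
  have : centralIndices n ℓ = Icc ((n + 2 - ℓ) / 2) (min n ((n + ℓ) / 2)) := by
    ext j
    simp only [centralIndices, mem_filter, mem_range, mem_Icc]
    omega
  rw [this, Nat.card_Icc]
  omega

theorem choose_le_choose_of_mem_centralIndices {n ℓ j k : ℕ} (hj : j ∉ centralIndices n ℓ)
    (hk : k ∈ centralIndices n ℓ) : n.choose j ≤ n.choose k := by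
  simp only [centralIndices, mem_filter, mem_range] at hj hk
  rcases lt_or_ge n j with hjn | hjn
  · simp [Nat.choose_eq_zero_of_lt hjn]
  apply Nat.choose_le_choose_of_abs_le
  rw [abs_eq_max_neg, abs_eq_max_neg]
  omega

theorem Finset.sum_card_slice_div_choose_le_card_of_isAntichain_fiber {α ι 𝕜 : Type*}
    [Fintype α] [DecidableEq ι] [Semifield 𝕜] [LinearOrder 𝕜] [IsStrictOrderedRing 𝕜]
    {𝒜 : Finset (Finset α)} {T : Finset ι} (f : Finset α → ι) (hf : ∀ A ∈ 𝒜, f A ∈ T)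
    (hanti : ∀ t ∈ T, IsAntichain (· ⊆ ·) (SetLike.coe {A ∈ 𝒜 | f A = t})) :
    ∑ r ∈ range (Fintype.card α + 1), (#(𝒜 # r) : 𝕜) / (Fintype.card α).choose r ≤ #T := by
  classical
  have slice_eq (r : ℕ) : #(𝒜 # r) = ∑ t ∈ T, #({A ∈ 𝒜 | f A = t} # r) := by
    rw [card_eq_sum_card_fiberwise fun A hA => hf A (mem_slice.mp hA).1]
    refine sum_congr rfl fun t _ => congrArg card ?_
    ext A
    simp only [mem_filter, mem_slice]
    tauto
  simp_rw [slice_eq, Nat.cast_sum, sum_div]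
  rw [sum_comm, card_eq_sum_ones, Nat.cast_sum, Nat.cast_one]
  exact sum_le_sum fun t ht => sum_card_slice_div_choose_le_one (hanti t ht)

theorem Finset.card_le_sum_choose_centralIndices {α ι : Type*} [Fintype α] [DecidableEq ι]
    {𝒜 : Finset (Finset α)} {T : Finset ι} (hT : T.Nonempty) (f : Finset α → ι)
    (hf : ∀ A ∈ 𝒜, f A ∈ T) (hanti : ∀ t ∈ T, IsAntichain (· ⊆ ·) (SetLike.coe {A ∈ 𝒜 | f A = t})) :
    #𝒜 ≤ ∑ j ∈ centralIndices (Fintype.card α) #T, (Fintype.card α).choose j := by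
  set n := Fintype.card α
  have hJ : (centralIndices n #T).Nonempty := by
    rw [← card_pos, card_centralIndices]; have := hT.card_pos; omega
  have hslice_le (r : ℕ) : #(𝒜 # r) ≤ n.choose r := (sized_slice (𝒜 := 𝒜)).card_le
  have hsum : ∑ r ∈ range (n + 1), (#(𝒜 # r) : ℚ) / n.choose r ≤ #(centralIndices n #T) := by
    rw [card_centralIndices, Nat.cast_min]
    refine le_min (sum_card_slice_div_choose_le_card_of_isAntichain_fiber f hf hanti) ?_
    calc ∑ r ∈ range (n + 1), (#(𝒜 # r) : ℚ) / n.choose r ≤ ∑ r ∈ range (n + 1), 1 :=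
          sum_le_sum fun r _ => div_le_one_of_le₀ (by exact_mod_cast hslice_le r) (by positivity)
      _ = ((n + 1 : ℕ) : ℚ) := by simp
  rw [← sum_card_slice, ← Nat.range_succ_eq_Iic]
  exact_mod_cast sum_le_sum_of_sum_div_le (m := fun r => (#(𝒜 # r) : ℚ))
    (fun j hj => (mem_filter.mp hj).1) hJ
    (fun r hr => by exact_mod_cast Nat.choose_pos (Nat.lt_succ_iff.mp (mem_range.mp hr)))
    (fun _ _ => by positivity) (fun r _ => by exact_mod_cast hslice_le r)
    (fun j _ hj k hk => by exact_mod_cast choose_le_choose_of_mem_centralIndices hj hk) hsum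

theorem card_filter_mem_Ioc_le_sum_choose_centralIndices {α : Type*} [Fintype α]
    (φ : Finset α → ℝ) {δ : ℝ} (hδ : 0 < δ) (hφ : ∀ ⦃A B⦄, A ⊂ B → φ A + δ ≤ φ B) (x : ℝ)
    {ℓ : ℕ} (hℓ : 1 ≤ ℓ) :
    #{A | φ A ∈ Set.Ioc x (x + ℓ * δ)} ≤
      ∑ j ∈ centralIndices (Fintype.card α) ℓ, (Fintype.card α).choose j := by
  set level : Finset α → ℤ := fun A => ⌈(φ A - x) / δ⌉
  have level_lt : ∀ ⦃A B⦄, A ⊂ B → level A < level B := fun A B h => by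
    have : (φ A - x) / δ + 1 ≤ (φ B - x) / δ := by
      rw [div_add_one hδ.ne', div_le_div_iff_of_pos_right hδ]; linarith [hφ h]
    simpa [level, Int.ceil_add_one] using Int.ceil_mono this
  have hT : #(Icc (1 : ℤ) ℓ) = ℓ := by simp
  have bound := card_le_sum_choose_centralIndices (𝒜 := {A | φ A ∈ Set.Ioc x (x + ℓ * δ)})
    (T := Icc (1 : ℤ) ℓ) (by simp; omega) level (fun A hA => ?_)
    fun t _ A hA B hB hAB hsub => ?_
  · rwa [hT] at bound
  · obtain ⟨h₁, h₂⟩ := (mem_filter.mp hA).2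
    rw [mem_Icc, Int.one_le_ceil_iff, Int.ceil_le, div_le_iff₀ hδ, lt_div_iff₀ hδ]
    push_cast
    constructor <;> linarith
  · simp only [coe_filter, Set.mem_ofPred_eq] at hA hB
    exact (level_lt (ssubset_of_subset_of_ne hsub hAB)).ne (hA.2.trans hB.2.symm)

theorem Finset.sum_piecewise_eq_sum_add {ι M : Type*} [Fintype ι] [DecidableEq ι]
    [AddCommGroup M] (A : Finset ι) (f g : ι → M) :
    ∑ i, A.piecewise f g i = ∑ i, g i + ∑ i ∈ A, (f i - g i) := by
  rw [sum_piecewise, univ_inter, sum_sub_distrib, ← sum_sdiff (subset_univ A) (f := g)]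
  abel

theorem Finset.sum_piecewise_add_le_of_ssubset {ι M : Type*} [Fintype ι] [DecidableEq ι]
    [AddCommGroup M] [LinearOrder M] [IsOrderedAddMonoid M] {f g : ι → M} {δ : M} (hδ : 0 ≤ δ)
    (hfg : ∀ i, g i + δ ≤ f i) {A B : Finset ι} (hAB : A ⊂ B) :
    ∑ i, A.piecewise f g i + δ ≤ ∑ i, B.piecewise f g i := by
  obtain ⟨i, hi⟩ := sdiff_nonempty.mpr (not_subset_of_ssubset hAB)
  have gap (j : ι) : δ ≤ f j - g j := le_sub_iff_add_le'.mpr (hfg j)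
  have : δ ≤ ∑ j ∈ B \ A, (f j - g j) :=
    (gap i).trans (single_le_sum (fun j _ => hδ.trans (gap j)) hi)
  rw [sum_piecewise_eq_sum_add, sum_piecewise_eq_sum_add, ← sum_sdiff hAB.subset, add_assoc,
    add_comm (∑ j ∈ A, _)]
  gcongr

theorem card_filter_sum_piecewise_one_neg_one_mem_Ioc {ι : Type*} [Fintype ι] [DecidableEq ι]
    (ℓ : ℕ) :
    #{A : Finset ι | ∑ i, A.piecewise (fun _ => (1 : ℝ)) (fun _ => -1) i ∈ Set.Ioc (-(ℓ : ℝ)) ℓ} =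
      ∑ j ∈ centralIndices (Fintype.card ι) ℓ, (Fintype.card ι).choose j := by
  have mem_iff (A : Finset ι) :
      ∑ i, A.piecewise (fun _ => (1 : ℝ)) (fun _ => -1) i ∈ Set.Ioc (-(ℓ : ℝ)) ℓ ↔
        #A ∈ centralIndices (Fintype.card ι) ℓ := by
    have sum_eq : ∑ i, A.piecewise (fun _ => (1 : ℝ)) (fun _ => -1) i =
        2 * #A - Fintype.card ι := by
      simp [sum_piecewise_eq_sum_add]
      ring
    have := A.card_le_univ
    rw [sum_eq, Set.mem_Ioc, neg_lt_sub_iff_lt_add, sub_le_iff_le_add, centralIndices, mem_filter,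
      mem_range]
    norm_cast
    omega
  rw [filter_congr fun A _ => mem_iff A, card_filter, ← powerset_univ,
    sum_powerset_apply_card fun j => if j ∈ centralIndices _ ℓ then 1 else 0, card_univ]
  simp_rw [smul_eq_mul, mul_boole, ← sum_filter, filter_mem_eq_inter]
  rw [inter_eq_right.mpr (centralIndices_subset_range _ _)]

namespace MeasureTheory.Measure

instance isProbabilityMeasure_half_smul_dirac_add_dirac {α : Type*} [MeasurableSpace α]
    (a b : α) :
    IsProbabilityMeasure ((2 : ℝ≥0∞)⁻¹ • (dirac a + dirac b)) :=
  ⟨by simp [ENNReal.inv_two_add_inv_two]⟩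

theorem pi_half_smul_dirac_add_dirac {ι : Type*} [Fintype ι] [DecidableEq ι] {α : ι → Type*}
    [∀ i, MeasurableSpace (α i)] (a b : ∀ i, α i) :
    Measure.pi (fun i => (2 : ℝ≥0∞)⁻¹ • (dirac (a i) + dirac (b i))) =
      (2 ^ Fintype.card ι : ℝ≥0∞)⁻¹ • ∑ A : Finset ι, dirac (A.piecewise a b) := by
  refine pi_eq fun s hs => ?_
  simp only [smul_apply, add_apply, dirac_apply' _ (hs _), finsetSum_apply,
    dirac_apply' _ (MeasurableSet.univ_pi hs), smul_eq_mul]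
  rw [prod_mul_distrib, prod_const, card_univ, ENNReal.inv_pow, Fintype.prod_add]
  congr 1
  refine Finset.sum_congr rfl fun A _ => ?_
  rw [← coe_univ, Set.indicator_pi_one_apply]
  have (i : ι) : (s i).indicator 1 (A.piecewise a b i) = A.piecewise
      (fun i => (s i).indicator (1 : α i → ℝ≥0∞) (a i)) (fun i => (s i).indicator 1 (b i)) i := by
    by_cases hi : i ∈ A <;> simp [hi]
  simp only [this, prod_piecewise, univ_inter, compl_eq_univ_sdiff]

theorem smul_sum_dirac_apply {κ β : Type*} [Fintype κ] [MeasurableSpace β] (c : ℝ≥0∞)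
    (p : κ → β) {s : Set β} (hs : MeasurableSet s) [DecidablePred (p · ∈ s)] :
    (c • ∑ k, dirac (p k)) s = c * #{k | p k ∈ s} := by
  simp [dirac_apply' _ hs, Set.indicator_apply, sum_boole]

theorem dirac_add_dirac_eq_max_min {α : Type*} [MeasurableSpace α] [LinearOrder α] (a b : α) :
    dirac a + dirac b = dirac (max a b) + dirac (min a b) := by
  rcases le_total a b with h | h <;> simp [h, add_comm]

end MeasureTheory.Measure

theorem nu_two : nu 2 = (2 : ℝ≥0∞)⁻¹ • (Measure.dirac 1 + Measure.dirac (-1)) := by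
  rw [nu, sum_range_succ, sum_range_one, add_comm]
  norm_num

/-- Littlewood–Offord for intervals of length 2ℓ: if Xᵢ is uniform on two points at
distance ≥ 2, then P(∑Xᵢ ∈ (x-ℓ, x+ℓ]) ≤ P(ε₁+⋯+εₙ ∈ (-ℓ, ℓ]) for i.i.d.
Rademacher εᵢ (uniform on {-1, 1}, i.e. ν²). -/
theorem littlewood_offord_interval {Ω : Type*} [MeasurableSpace Ω]
    (P : Measure Ω) [IsProbabilityMeasure P]
    (n : ℕ) (a b : Fin n → ℝ) (hsep : ∀ i, 2 ≤ |a i - b i|)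
    (X : Fin n → Ω → ℝ) (hmeas : ∀ i, Measurable (X i))
    (hindep : iIndepFun X P)
    (hunif : ∀ i, P.map (X i) =
      (2 : ℝ≥0∞)⁻¹ • (Measure.dirac (a i) + Measure.dirac (b i)))
    (ℓ : ℕ) (hℓ : 1 ≤ ℓ) (x : ℝ) :
    P {ω | (∑ i, X i ω) ∈ Set.Ioc (x - ℓ) (x + ℓ)} ≤
      (Measure.pi fun _ : Fin n => nu 2) {y | (∑ i, y i) ∈ Set.Ioc (-(ℓ : ℝ)) ℓ} := by
  have hI (c d : ℝ) : MeasurableSet {y : Fin n → ℝ | ∑ i, y i ∈ Set.Ioc c d} :=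
    (by fun_prop : Measurable fun y : Fin n → ℝ => ∑ i, y i) measurableSet_Ioc
  set u : Fin n → ℝ := fun i => max (a i) (b i)
  set v : Fin n → ℝ := fun i => min (a i) (b i)
  have hvu (i : Fin n) : v i + 2 ≤ u i := by linarith [max_sub_min_eq_abs' (a i) (b i), hsep i]
  calc P {ω | ∑ i, X i ω ∈ Set.Ioc (x - ℓ) (x + ℓ)}
      = P.map (fun ω i => X i ω) {y | ∑ i, y i ∈ Set.Ioc (x - ℓ) (x + ℓ)} :=
        (Measure.map_apply (by fun_prop) (hI _ _)).symm
    _ = (2 ^ n)⁻¹ * #{A : Finset (Fin n) | ∑ i, A.piecewise u v i ∈ Set.Ioc (x - ℓ) (x + ℓ)} := by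
        rw [hindep.map_fun_eq_pi_map fun i => (hmeas i).aemeasurable, funext hunif,
          funext fun i => congrArg _ (Measure.dirac_add_dirac_eq_max_min (a i) (b i)),
          Measure.pi_half_smul_dirac_add_dirac u v, Measure.smul_sum_dirac_apply _ _ (hI _ _),
          Fintype.card_fin]
        simp only [Set.mem_ofPred_eq]
    _ ≤ (2 ^ n)⁻¹ * ∑ j ∈ centralIndices n ℓ, n.choose j := by
        have key := card_filter_mem_Ioc_le_sum_choose_centralIndices _ two_pos
          (fun A B => sum_piecewise_add_le_of_ssubset zero_le_two hvu) (x - ℓ) hℓ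
        rw [show x - ℓ + ℓ * 2 = x + ℓ by ring, Fintype.card_fin] at key
        gcongr
    _ = (Measure.pi fun _ : Fin n => nu 2) {y | ∑ i, y i ∈ Set.Ioc (-(ℓ : ℝ)) ℓ} := by
        rw [nu_two, Measure.pi_half_smul_dirac_add_dirac (fun _ => 1) (fun _ => -1),
          Measure.smul_sum_dirac_apply _ _ (hI _ _)]
        simp only [Set.mem_ofPred_eq]
        rw [card_filter_sum_piecewise_one_neg_one_mem_Ioc, Fintype.card_fin]
end
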